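/- arXiv:2511.16271 — 4 statements merged into one kernel-verified Lean document; each statement's English description precedes it below -/
import Mathlib

section
/- (Variance of the maximum of an exchangeable Gaussian pair.) Let Z_1, Z_2 be independent standard normal random variables, let s > 0 and r ∈ [−1, 1], and set G_1 := s Z_1 and G_2 := s ( r Z_1 + √(1 − r²) Z_2 ), so that (G_1, G_2) is a centered Gaussian pair with common variance s² and correlation r. Then Var( max(G_1, G_2) ) = s² ( 1 − (1 − r)/π ). -/
open MeasureTheory ProbabilityTheory Filter Real
open scoped ENNReal NNReal

namespace VarMaxAux

noncomputable section

lemma gpdf_eq (x : ℝ) :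
    gaussianPDFReal 0 1 x = (Real.sqrt (2 * π))⁻¹ * Real.exp (-x ^ 2 / 2) := by
  simp [gaussianPDFReal]

lemma gauss_eq_withDensity :
    gaussianReal 0 1 = (volume : Measure ℝ).withDensity
      (fun x => ENNReal.ofReal (gaussianPDFReal 0 1 x)) :=
  gaussianReal_of_var_ne_zero 0 one_ne_zero

lemma density_nnreal :
    (fun x : ℝ => ENNReal.ofReal (gaussianPDFReal 0 1 x))
      = fun x => ((gaussianPDFReal 0 1 x).toNNReal : ℝ≥0∞) := rfl

lemma smul_eq_mul_density (g : ℝ → ℝ) :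
    (fun x => (gaussianPDFReal 0 1 x).toNNReal • g x)
      = fun x => gaussianPDFReal 0 1 x * g x := by
  funext x
  simp [NNReal.smul_def, Real.coe_toNNReal _ (gaussianPDFReal_nonneg 0 1 x)]

lemma integral_gauss (g : ℝ → ℝ) :
    ∫ x, g x ∂(gaussianReal 0 1) = ∫ x, gaussianPDFReal 0 1 x * g x := by
  rw [gauss_eq_withDensity, density_nnreal,
    integral_withDensity_eq_integral_smul
      (measurable_gaussianPDFReal 0 1).real_toNNReal g,
    smul_eq_mul_density]

lemma integrable_gauss_iff (g : ℝ → ℝ) :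
    Integrable g (gaussianReal 0 1)
      ↔ Integrable (fun x => gaussianPDFReal 0 1 x * g x) volume := by
  rw [gauss_eq_withDensity, density_nnreal,
    integrable_withDensity_iff_integrable_smul
      (measurable_gaussianPDFReal 0 1).real_toNNReal,
    smul_eq_mul_density]

lemma integrable_poly_gauss (n : ℕ) :
    Integrable (fun x : ℝ => x ^ n * Real.exp (-x ^ 2 / 2)) := by
  have h := integrable_rpow_mul_exp_neg_mul_sq (b := 1/2) (by norm_num)
    (s := (n : ℝ)) (lt_of_lt_of_le neg_one_lt_zero (Nat.cast_nonneg n))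
  have e : (fun x : ℝ => x ^ ((n : ℝ)) * Real.exp (-(1/2) * x ^ 2))
      = fun x : ℝ => x ^ n * Real.exp (-x ^ 2 / 2) := by
    funext x
    rw [Real.rpow_natCast, show -(1/2 : ℝ) * x ^ 2 = -x ^ 2 / 2 by ring]
  rwa [e] at h

lemma integrable_gauss_id : Integrable (fun x : ℝ => x) (gaussianReal 0 1) := by
  rw [integrable_gauss_iff]
  have h := (integrable_poly_gauss 1).const_mul (Real.sqrt (2 * π))⁻¹
  have e : (fun x : ℝ => (Real.sqrt (2 * π))⁻¹ * (x ^ 1 * Real.exp (-x ^ 2 / 2)))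
      = fun x => gaussianPDFReal 0 1 x * x := by
    funext x; rw [gpdf_eq]; ring
  rwa [e] at h

lemma integrable_gauss_abs : Integrable (fun x : ℝ => |x|) (gaussianReal 0 1) := by
  rw [integrable_gauss_iff]
  have h := ((integrable_poly_gauss 1).const_mul (Real.sqrt (2 * π))⁻¹).abs
  have e : (fun x : ℝ => |(Real.sqrt (2 * π))⁻¹ * (x ^ 1 * Real.exp (-x ^ 2 / 2))|)
      = fun x => gaussianPDFReal 0 1 x * |x| := by
    funext x
    rw [gpdf_eq, abs_mul, abs_mul,
      abs_of_nonneg (by positivity : (0:ℝ) ≤ (Real.sqrt (2 * π))⁻¹),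
      abs_of_nonneg (Real.exp_nonneg _), pow_one]
    ring
  rwa [e] at h

lemma integrable_gauss_sq : Integrable (fun x : ℝ => x ^ 2) (gaussianReal 0 1) := by
  rw [integrable_gauss_iff]
  have h := (integrable_poly_gauss 2).const_mul (Real.sqrt (2 * π))⁻¹
  have e : (fun x : ℝ => (Real.sqrt (2 * π))⁻¹ * (x ^ 2 * Real.exp (-x ^ 2 / 2)))
      = fun x => gaussianPDFReal 0 1 x * x ^ 2 := by
    funext x; rw [gpdf_eq]; ring
  rwa [e] at h

lemma integral_gauss_id : ∫ x, x ∂(gaussianReal 0 1) = 0 := by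
  rw [integral_gauss]
  set f : ℝ → ℝ := fun x => gaussianPDFReal 0 1 x * x with hf
  have h1 : ∫ x, f (-x) = ∫ x, f x := integral_neg_eq_self f volume
  have h2 : ∀ x : ℝ, f (-x) = - f x := by
    intro x
    simp only [hf, gpdf_eq]
    rw [show ((-x : ℝ)) ^ 2 = x ^ 2 by ring]
    ring
  have h3 : ∫ x, f (-x) = - ∫ x, f x := by
    simp_rw [h2]; exact integral_neg f
  have h4 := h1.symm.trans h3
  linarith

lemma integral_Ioi_pow_gauss (n : ℕ) :
    ∫ x in Set.Ioi (0:ℝ), x ^ n * Real.exp (-x ^ 2 / 2)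
      = ((1:ℝ)/2) ^ (-((n:ℝ)+1)/2) * (1/2) * Real.Gamma (((n:ℝ)+1)/2) := by
  rw [← integral_rpow_mul_exp_neg_mul_rpow (p := 2) (q := (n:ℝ)) (b := 1/2) two_pos
    (lt_of_lt_of_le neg_one_lt_zero (Nat.cast_nonneg n)) (by norm_num)]
  refine setIntegral_congr_fun measurableSet_Ioi fun x hx => ?_
  have h2 : x ^ (2:ℝ) = x ^ (2:ℕ) := by
    rw [show ((2:ℝ)) = ((2:ℕ):ℝ) by norm_num, Real.rpow_natCast]
  rw [Real.rpow_natCast, h2, show -(1/2 : ℝ) * x ^ (2:ℕ) = -x ^ 2 / 2 by ring]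

lemma integral_Ioi_one_gauss :
    ∫ x in Set.Ioi (0:ℝ), x * Real.exp (-x ^ 2 / 2) = 1 := by
  have h := integral_Ioi_pow_gauss 1
  simp only [Nat.cast_one, pow_one] at h
  rw [h, show -((1:ℝ)+1)/2 = -1 by norm_num, show ((1:ℝ)+1)/2 = 1 by norm_num,
    Real.rpow_neg_one, Real.Gamma_one]
  norm_num

lemma integral_Ioi_sq_gauss :
    ∫ x in Set.Ioi (0:ℝ), x ^ 2 * Real.exp (-x ^ 2 / 2) = Real.sqrt (2 * π) / 2 := by
  have h := integral_Ioi_pow_gauss 2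
  simp only [Nat.cast_ofNat] at h
  rw [h, show -((2:ℝ)+1)/2 = -(3/2) by norm_num, show ((2:ℝ)+1)/2 = 3/2 by norm_num]
  have hGamma : Real.Gamma (3/2) = Real.sqrt π / 2 := by
    rw [show (3:ℝ)/2 = 1/2 + 1 by norm_num, Real.Gamma_add_one (by norm_num),
      Real.Gamma_one_half_eq]
    ring
  have hpow : ((1:ℝ)/2) ^ (-(3/2) : ℝ) = 2 * Real.sqrt 2 := by
    rw [show (1:ℝ)/2 = 2⁻¹ by norm_num,
      Real.inv_rpow (by norm_num : (0:ℝ) ≤ 2), Real.rpow_neg (by norm_num : (0:ℝ) ≤ 2),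
      inv_inv, show ((3:ℝ)/2) = 1 + 1/2 by norm_num,
      Real.rpow_add (by norm_num : (0:ℝ) < 2), Real.rpow_one, ← Real.sqrt_eq_rpow]
  rw [hpow, hGamma]
  rw [show (2:ℝ) * Real.sqrt 2 * (1/2) * (Real.sqrt π / 2) = Real.sqrt 2 * Real.sqrt π / 2 by ring,
    ← Real.sqrt_mul (by norm_num : (0:ℝ) ≤ 2)]

lemma integral_gauss_sq : ∫ x, x ^ 2 ∂(gaussianReal 0 1) = 1 := by
  rw [integral_gauss]
  have e : (fun x : ℝ => gaussianPDFReal 0 1 x * x ^ 2)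
      = fun x => (fun t => (Real.sqrt (2 * π))⁻¹ * (t ^ 2 * Real.exp (-t ^ 2 / 2))) |x| := by
    funext x
    simp only []
    rw [gpdf_eq, sq_abs]
    ring
  rw [e, integral_comp_abs (f := fun t => (Real.sqrt (2 * π))⁻¹ * (t ^ 2 * Real.exp (-t ^ 2 / 2))),
    integral_const_mul, integral_Ioi_sq_gauss]
  have hpos : (0:ℝ) < Real.sqrt (2 * π) := Real.sqrt_pos.2 (by positivity)
  field_simp

lemma integral_gauss_abs :
    ∫ x, |x| ∂(gaussianReal 0 1) = 2 * (Real.sqrt (2 * π))⁻¹ := by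
  rw [integral_gauss]
  have e : (fun x : ℝ => gaussianPDFReal 0 1 x * |x|)
      = fun x => (fun t => (Real.sqrt (2 * π))⁻¹ * (t * Real.exp (-t ^ 2 / 2))) |x| := by
    funext x
    simp only []
    rw [gpdf_eq, sq_abs]
    ring
  rw [e, integral_comp_abs (f := fun t => (Real.sqrt (2 * π))⁻¹ * (t * Real.exp (-t ^ 2 / 2))),
    integral_const_mul, integral_Ioi_one_gauss]
  ring

lemma gauss_prod_eq :
    (gaussianReal 0 1).prod (gaussianReal 0 1)
      = (volume : Measure (ℝ × ℝ)).withDensity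
        (fun p => ENNReal.ofReal (gaussianPDFReal 0 1 p.1 * gaussianPDFReal 0 1 p.2)) := by
  have hmul : ∀ p : ℝ × ℝ,
      ENNReal.ofReal (gaussianPDFReal 0 1 p.1 * gaussianPDFReal 0 1 p.2)
        = ENNReal.ofReal (gaussianPDFReal 0 1 p.1) * ENNReal.ofReal (gaussianPDFReal 0 1 p.2) :=
    fun p => ENNReal.ofReal_mul (gaussianPDFReal_nonneg 0 1 p.1)
  refine Measure.prod_eq fun s t hs ht => ?_
  rw [Measure.volume_eq_prod, withDensity_apply _ (hs.prod ht)]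
  simp_rw [hmul]
  rw [← Measure.prod_restrict,
    lintegral_prod_mul ((measurable_gaussianPDFReal 0 1).ennreal_ofReal).aemeasurable
      ((measurable_gaussianPDFReal 0 1).ennreal_ofReal).aemeasurable,
    gauss_eq_withDensity, withDensity_apply _ hs, withDensity_apply _ ht]

lemma gauss_rot (a b c d : ℝ) (h1 : a^2 + c^2 = 1) (h2 : b^2 + d^2 = 1)
    (h3 : a*b + c*d = 0) :
    Measure.map (fun p : ℝ × ℝ => (a*p.1 + b*p.2, c*p.1 + d*p.2))
        ((gaussianReal 0 1).prod (gaussianReal 0 1))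
      = (gaussianReal 0 1).prod (gaussianReal 0 1) := by
  set T : ℝ × ℝ → ℝ × ℝ := fun p => (a*p.1 + b*p.2, c*p.1 + d*p.2) with hT
  have hTm : Measurable T := by
    apply Measurable.prod
    · exact (measurable_fst.const_mul a).add (measurable_snd.const_mul b)
    · exact (measurable_fst.const_mul c).add (measurable_snd.const_mul d)
  set Tl : (ℝ × ℝ) →ₗ[ℝ] (ℝ × ℝ) :=
    { toFun := T
      map_add' := fun p q => by
        simp only [hT, Prod.fst_add, Prod.snd_add, Prod.mk_add_mk, Prod.mk.injEq]
        constructor <;> ring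
      map_smul' := fun m p => by
        simp only [hT, Prod.smul_fst, Prod.smul_snd, Prod.smul_mk, RingHom.id_apply,
          smul_eq_mul, Prod.mk.injEq]
        constructor <;> ring } with hTl
  have hdet : LinearMap.det Tl = a*d - b*c := by
    rw [← LinearMap.det_toMatrix (Module.Basis.finTwoProd ℝ) Tl, Matrix.det_fin_two]
    rw [LinearMap.toMatrix_apply, LinearMap.toMatrix_apply, LinearMap.toMatrix_apply,
      LinearMap.toMatrix_apply]
    simp only [hTl, Module.Basis.finTwoProd_zero, Module.Basis.finTwoProd_one, LinearMap.coe_mk,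
      AddHom.coe_mk, hT, Module.Basis.coe_finTwoProd_repr]
    norm_num
  have hdet2 : (a*d - b*c)^2 = 1 := by nlinarith [h1, h2, h3]
  have hdetne : LinearMap.det Tl ≠ 0 := by
    rw [hdet]
    intro h
    rw [h] at hdet2
    norm_num at hdet2
  have habs : |a*d - b*c| = 1 := by
    nlinarith [abs_nonneg (a*d - b*c), sq_abs (a*d - b*c)]
  have hvol : Measure.map T (volume : Measure (ℝ × ℝ)) = volume := by
    have h := Measure.map_linearMap_addHaar_eq_smul_addHaar (volume : Measure (ℝ × ℝ)) hdetne
    have hco : (Tl : (ℝ × ℝ) → (ℝ × ℝ)) = T := rfl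
    rw [hco] at h
    rw [h, hdet, abs_inv, habs]
    norm_num
  -- density invariance
  have hρT : ∀ p : ℝ × ℝ,
      gaussianPDFReal 0 1 (T p).1 * gaussianPDFReal 0 1 (T p).2
        = gaussianPDFReal 0 1 p.1 * gaussianPDFReal 0 1 p.2 := by
    rintro ⟨x, y⟩
    simp only [hT, gpdf_eq]
    rw [mul_mul_mul_comm, ← Real.exp_add, mul_mul_mul_comm, ← Real.exp_add]
    congr 2
    have key : (a*x + b*y)^2 + (c*x + d*y)^2 = x^2 + y^2 := by
      linear_combination x^2 * h1 + y^2 * h2 + (2*x*y) * h3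
    linarith [key]
  set ρ : ℝ × ℝ → ℝ≥0∞ :=
    fun p => ENNReal.ofReal (gaussianPDFReal 0 1 p.1 * gaussianPDFReal 0 1 p.2) with hρ
  have hρm : Measurable ρ :=
    (((measurable_gaussianPDFReal 0 1).comp measurable_fst).mul
      ((measurable_gaussianPDFReal 0 1).comp measurable_snd)).ennreal_ofReal
  ext s hs
  rw [gauss_prod_eq, Measure.map_apply hTm hs, withDensity_apply _ (hTm hs),
    withDensity_apply _ hs]
  calc ∫⁻ p in T ⁻¹' s, ρ p ∂volume
      = ∫⁻ p, (s.indicator ρ) (T p) ∂volume := by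
        rw [← lintegral_indicator (hTm hs)]
        congr 1
        funext p
        by_cases hp : T p ∈ s
        · rw [Set.indicator_of_mem (show p ∈ T ⁻¹' s from hp), Set.indicator_of_mem hp]
          simp only [hρ]
          rw [hρT p]
        · rw [Set.indicator_of_notMem (show p ∉ T ⁻¹' s from hp),
            Set.indicator_of_notMem hp]
    _ = ∫⁻ q, (s.indicator ρ) q ∂(Measure.map T volume) :=
        (lintegral_map (hρm.indicator hs) hTm).symm
    _ = ∫⁻ q in s, ρ q ∂volume := by rw [hvol, lintegral_indicator hs]

end

end VarMaxAux

open VarMaxAux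

/-- **Variance of the maximum of an exchangeable Gaussian pair.**
If `Z₁, Z₂` are independent standard normals, `s > 0`, `r ∈ [−1,1]`,
`G₁ = s Z₁` and `G₂ = s (r Z₁ + √(1−r²) Z₂)`, then
`Var(max(G₁,G₂)) = s² (1 − (1−r)/π)`. -/
theorem variance_max_gaussian_pair {Ω : Type*} [MeasureSpace Ω]
    [IsProbabilityMeasure (ℙ : Measure Ω)]
    (Z₁ Z₂ : Ω → ℝ) (hm₁ : Measurable Z₁) (hm₂ : Measurable Z₂)
    (hg₁ : Measure.map Z₁ ℙ = gaussianReal 0 1)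
    (hg₂ : Measure.map Z₂ ℙ = gaussianReal 0 1)
    (hindep : IndepFun Z₁ Z₂ ℙ)
    (s r : ℝ) (hs : 0 < s) (hr : r ∈ Set.Icc (-1 : ℝ) 1) :
    variance (fun ω => max (s * Z₁ ω) (s * (r * Z₁ ω + Real.sqrt (1 - r ^ 2) * Z₂ ω))) ℙ
      = s ^ 2 * (1 - (1 - r) / Real.pi) := by
  obtain ⟨hrm1, hr1⟩ := hr
  have hmap : Measure.map (fun ω => (Z₁ ω, Z₂ ω)) ℙ
      = (gaussianReal 0 1).prod (gaussianReal 0 1) := by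
    rw [(indepFun_iff_map_prod_eq_prod_map_map hm₁.aemeasurable hm₂.aemeasurable).mp hindep,
      hg₁, hg₂]
  have hpair : AEMeasurable (fun ω => (Z₁ ω, Z₂ ω)) ℙ := (hm₁.prodMk hm₂).aemeasurable
  by_cases hre : r = 1
  · -- degenerate case `r = 1` : the maximum is just `s * Z₁`
    subst hre
    have hfun : (fun ω => max (s * Z₁ ω) (s * (1 * Z₁ ω + Real.sqrt (1 - 1 ^ 2) * Z₂ ω)))
        = fun ω => s * Z₁ ω := by
      funext ω
      norm_num
    rw [hfun, variance_const_mul]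
    have hid : AEStronglyMeasurable (fun x : ℝ => x) (Measure.map Z₁ ℙ) :=
      aestronglyMeasurable_id
    have hmemγ : MemLp (fun x : ℝ => x) 2 (gaussianReal 0 1) := by
      refine (memLp_two_iff_integrable_sq aestronglyMeasurable_id).2 ?_
      refine integrable_gauss_sq.congr (Filter.Eventually.of_forall fun x => ?_)
      simp [Pi.pow_apply]
    have hmem : MemLp Z₁ 2 ℙ := by
      have h := memLp_map_measure_iff (p := (2 : ENNReal)) hid hm₁.aemeasurable
      rw [hg₁] at h
      exact h.mp hmemγ
    rw [variance_eq_sub hmem]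
    have e1 : ∫ ω, Z₁ ω ∂ℙ = ∫ x, x ∂(gaussianReal 0 1) := by
      rw [← hg₁, integral_map hm₁.aemeasurable hid]
    have hmg : AEStronglyMeasurable (fun x : ℝ => x ^ 2) (Measure.map Z₁ ℙ) :=
      ((continuous_pow 2).measurable).aestronglyMeasurable
    have e2 : ∫ ω, (Z₁ ^ 2) ω ∂ℙ = ∫ x, x ^ 2 ∂(gaussianReal 0 1) := by
      rw [← hg₁,
        show ((Z₁ ^ 2 : Ω → ℝ)) = fun ω => (fun x : ℝ => x ^ 2) (Z₁ ω) from rfl]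
      exact (integral_map hm₁.aemeasurable hmg).symm
    have h1 : (ℙ[Z₁ ^ 2] : ℝ) = 1 := by rw [e2, integral_gauss_sq]
    have h2 : (ℙ[Z₁] : ℝ) = 0 := by rw [e1, integral_gauss_id]
    rw [h1, h2]
    norm_num
  · -- main case: `r < 1`
    have hrlt : r < 1 := lt_of_le_of_ne hr1 hre
    have h1r : (0:ℝ) < 1 - r := by linarith
    have h1r2 : (0:ℝ) ≤ 1 - r ^ 2 := by nlinarith
    set q : ℝ := Real.sqrt (1 - r ^ 2) with hqdef
    have hq2 : q ^ 2 = 1 - r ^ 2 := Real.sq_sqrt h1r2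
    have hqnn : 0 ≤ q := Real.sqrt_nonneg _
    set c : ℝ := Real.sqrt (2 * (1 - r)) with hcdef
    have hc2 : c ^ 2 = 2 * (1 - r) := Real.sq_sqrt (by linarith)
    have hcpos : 0 < c := Real.sqrt_pos.2 (by linarith)
    set α : ℝ := s * q / c with hα
    set β : ℝ := s * c / 2 with hβ
    set μ2 : Measure (ℝ × ℝ) := (gaussianReal 0 1).prod (gaussianReal 0 1) with hμ2
    set F : ℝ × ℝ → ℝ := fun p => max (s * p.1) (s * (r * p.1 + q * p.2)) with hF
    have hFm : Measurable F :=
      (measurable_fst.const_mul s).max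
        (((measurable_fst.const_mul r).add (measurable_snd.const_mul q)).const_mul s)
    set R : ℝ × ℝ → ℝ × ℝ :=
      fun p => (((1-r)/c) * p.1 + (q/c) * p.2, (-(q/c)) * p.1 + ((1-r)/c) * p.2) with hR
    have hRm : Measurable R := by
      apply Measurable.prod
      · exact (measurable_fst.const_mul _).add (measurable_snd.const_mul _)
      · exact (measurable_fst.const_mul _).add (measurable_snd.const_mul _)
    have hrot : Measure.map R μ2 = μ2 := by
      refine gauss_rot ((1-r)/c) (q/c) (-(q/c)) ((1-r)/c) ?_ ?_ ?_
      · have e : ((1-r)/c) ^ 2 + (-(q/c)) ^ 2 = ((1-r) ^ 2 + q ^ 2) / c ^ 2 := by ring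
        rw [e, div_eq_one_iff_eq (by positivity)]
        linear_combination hq2 - hc2
      · have e : (q/c) ^ 2 + ((1-r)/c) ^ 2 = ((1-r) ^ 2 + q ^ 2) / c ^ 2 := by ring
        rw [e, div_eq_one_iff_eq (by positivity)]
        linear_combination hq2 - hc2
      · ring
    set H : ℝ × ℝ → ℝ := fun p => α * p.2 + β * |p.1| with hH
    have hHm : Measurable H :=
      (measurable_snd.const_mul α).add (measurable_fst.abs.const_mul β)
    have hmax : ∀ x y : ℝ, max x y = (x + y + |x - y|) / 2 := by
      intro x y
      rcases le_total x y with h | h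
      · rw [max_eq_right h, abs_of_nonpos (sub_nonpos.2 h)]; ring
      · rw [max_eq_left h, abs_of_nonneg (sub_nonneg.2 h)]; ring
    have hFR : ∀ p : ℝ × ℝ, F (R p) = H p := by
      rintro ⟨u, v⟩
      simp only [hF, hR, hH]
      rw [hmax]
      have hdiff : s * (((1-r)/c) * u + (q/c) * v)
          - s * (r * (((1-r)/c) * u + (q/c) * v)
            + q * ((-(q/c)) * u + ((1-r)/c) * v)) = s * c * u := by
        have hcinv : c * c⁻¹ = 1 := mul_inv_cancel₀ hcpos.ne'
        linear_combination (s * u / c) * hq2 - (s * u / c) * hc2 + (s * u * c) * hcinv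
      have hsum : s * (((1-r)/c) * u + (q/c) * v)
          + s * (r * (((1-r)/c) * u + (q/c) * v)
            + q * ((-(q/c)) * u + ((1-r)/c) * v)) = 2 * (α * v) := by
        rw [hα]
        linear_combination (-(s * u / c)) * hq2
      rw [hdiff, hsum, abs_mul, abs_of_nonneg (mul_pos hs hcpos).le, hβ]
      ring
    -- integrability facts over the product measure
    have ih1 : Integrable (fun z : ℝ × ℝ => (1:ℝ) * (α ^ 2 * z.2 ^ 2)) μ2 :=
      (integrable_const (1:ℝ)).mul_prod (integrable_gauss_sq.const_mul (α ^ 2))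
    have ih2 : Integrable (fun z : ℝ × ℝ => (2 * α * β * |z.1|) * z.2) μ2 :=
      (integrable_gauss_abs.const_mul (2 * α * β)).mul_prod integrable_gauss_id
    have ih3 : Integrable (fun z : ℝ × ℝ => (β ^ 2 * z.1 ^ 2) * (1:ℝ)) μ2 :=
      (integrable_gauss_sq.const_mul (β ^ 2)).mul_prod (integrable_const (1:ℝ))
    have hH2eq : ∀ z : ℝ × ℝ, (1:ℝ) * (α ^ 2 * z.2 ^ 2) + (2 * α * β * |z.1|) * z.2
        + (β ^ 2 * z.1 ^ 2) * 1 = H z ^ 2 := by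
      intro z
      simp only [hH]
      linear_combination (-(β ^ 2)) * sq_abs z.1
    have hH2int : Integrable (fun z : ℝ × ℝ => H z ^ 2) μ2 := by
      refine ((ih1.add ih2).add ih3).congr (Filter.Eventually.of_forall fun z => ?_)
      simpa using hH2eq z
    have iha : Integrable (fun z : ℝ × ℝ => α * z.2) μ2 := by
      refine ((integrable_const (1:ℝ)).mul_prod (integrable_gauss_id.const_mul α)).congr
        (Filter.Eventually.of_forall fun z => ?_)
      simp
    have ihb : Integrable (fun z : ℝ × ℝ => β * |z.1|) μ2 := by
      refine ((integrable_gauss_abs.const_mul β).mul_prod (integrable_const (1:ℝ))).congr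
        (Filter.Eventually.of_forall fun z => ?_)
      simp
    -- values of the integrals
    have hIone : ∫ x, (1:ℝ) ∂(gaussianReal 0 1) = 1 := by simp
    have hIH : ∫ z, H z ∂μ2 = β * (2 * (Real.sqrt (2 * Real.pi))⁻¹) := by
      have e : ∫ z, H z ∂μ2 = (∫ z : ℝ × ℝ, α * z.2 ∂μ2) + ∫ z : ℝ × ℝ, β * |z.1| ∂μ2 :=
        integral_add iha ihb
      rw [e]
      have ea : ∫ z : ℝ × ℝ, α * z.2 ∂μ2 = 0 := by
        rw [show (fun z : ℝ × ℝ => α * z.2) = fun z : ℝ × ℝ => (1:ℝ) * (α * z.2) by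
          funext z; ring]
        rw [integral_prod_mul (fun _ : ℝ => (1:ℝ)) (fun x : ℝ => α * x), hIone,
          integral_const_mul, integral_gauss_id]
        ring
      have eb : ∫ z : ℝ × ℝ, β * |z.1| ∂μ2 = β * (2 * (Real.sqrt (2 * Real.pi))⁻¹) := by
        rw [show (fun z : ℝ × ℝ => β * |z.1|) = fun z : ℝ × ℝ => (β * |z.1|) * (1:ℝ) by
          funext z; ring]
        rw [integral_prod_mul (fun x : ℝ => β * |x|) (fun _ : ℝ => (1:ℝ)), hIone,
          integral_const_mul, integral_gauss_abs]
        ring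
      rw [ea, eb]
      ring
    have hIH2 : ∫ z, H z ^ 2 ∂μ2 = α ^ 2 + β ^ 2 := by
      rw [show (fun z : ℝ × ℝ => H z ^ 2)
          = fun z : ℝ × ℝ => (1:ℝ) * (α ^ 2 * z.2 ^ 2) + (2 * α * β * |z.1|) * z.2
            + (β ^ 2 * z.1 ^ 2) * 1 from funext fun z => (hH2eq z).symm]
      have hAB : Integrable
          (fun z : ℝ × ℝ => (1:ℝ) * (α ^ 2 * z.2 ^ 2) + (2 * α * β * |z.1|) * z.2) μ2 :=
        ih1.add ih2
      rw [integral_add hAB ih3, integral_add ih1 ih2]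
      rw [integral_prod_mul (fun _ : ℝ => (1:ℝ)) (fun x : ℝ => α ^ 2 * x ^ 2),
        integral_prod_mul (fun x : ℝ => 2 * α * β * |x|) (fun x : ℝ => x),
        integral_prod_mul (fun x : ℝ => β ^ 2 * x ^ 2) (fun _ : ℝ => (1:ℝ))]
      simp only [integral_const_mul, hIone, integral_gauss_sq, integral_gauss_id,
        integral_gauss_abs]
      ring
    -- moment bounds / MemLp
    have hHmem : MemLp H 2 μ2 := by
      refine (memLp_two_iff_integrable_sq hHm.aestronglyMeasurable).2 ?_
      refine hH2int.congr (Filter.Eventually.of_forall fun z => ?_)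
      simp [Pi.pow_apply]
    have hFmem : MemLp F 2 μ2 := by
      rw [← hrot, memLp_map_measure_iff hFm.aestronglyMeasurable hRm.aemeasurable]
      rw [show F ∘ R = H from funext hFR]
      exact hHmem
    have hXmem : MemLp (fun ω => F (Z₁ ω, Z₂ ω)) 2 ℙ := by
      have h := memLp_map_measure_iff (p := (2 : ENNReal))
        (hFm.aestronglyMeasurable (μ := Measure.map (fun ω => (Z₁ ω, Z₂ ω)) ℙ)) hpair
      rw [hmap] at h
      exact h.mp hFmem
    -- transfer of the two integrals
    have e1 : ∫ ω, F (Z₁ ω, Z₂ ω) ∂ℙ = β * (2 * (Real.sqrt (2 * Real.pi))⁻¹) := by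
      rw [← integral_map hpair (hFm.aestronglyMeasurable), hmap, ← hrot,
        integral_map hRm.aemeasurable hFm.aestronglyMeasurable,
        show (fun z : ℝ × ℝ => F (R z)) = H from funext hFR, hIH]
    have e2 : ∫ ω, F (Z₁ ω, Z₂ ω) ^ 2 ∂ℙ = α ^ 2 + β ^ 2 := by
      have hFsq : Measurable (fun z : ℝ × ℝ => F z ^ 2) := hFm.pow_const 2
      rw [show (fun ω => F (Z₁ ω, Z₂ ω) ^ 2)
          = fun ω => (fun z : ℝ × ℝ => F z ^ 2) ((fun ω => (Z₁ ω, Z₂ ω)) ω) from rfl]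
      rw [← integral_map hpair hFsq.aestronglyMeasurable, hmap, ← hrot,
        integral_map hRm.aemeasurable hFsq.aestronglyMeasurable,
        show (fun z : ℝ × ℝ => F (R z) ^ 2) = fun z : ℝ × ℝ => H z ^ 2 from
          funext fun z => by rw [hFR], hIH2]
    -- put everything together
    have hgoal : variance (fun ω => F (Z₁ ω, Z₂ ω)) ℙ = s ^ 2 * (1 - (1 - r) / Real.pi) := by
      rw [variance_eq_sub hXmem]
      have eX2 : (ℙ[(fun ω => F (Z₁ ω, Z₂ ω)) ^ 2] : ℝ) = α ^ 2 + β ^ 2 := by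
        rw [show ((fun ω => F (Z₁ ω, Z₂ ω)) ^ 2 : Ω → ℝ)
            = fun ω => F (Z₁ ω, Z₂ ω) ^ 2 from rfl]
        exact e2
      have eX1 : (ℙ[fun ω => F (Z₁ ω, Z₂ ω)] : ℝ) = β * (2 * (Real.sqrt (2 * Real.pi))⁻¹) :=
        e1
      rw [eX2, eX1]
      have hsq2pi : (Real.sqrt (2 * Real.pi)) ^ 2 = 2 * Real.pi :=
        Real.sq_sqrt (by positivity)
      have hα2 : α ^ 2 = s ^ 2 * (1 + r) / 2 := by
        rw [hα, div_pow, mul_pow, hq2, hc2]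
        rw [div_eq_div_iff (by linarith) (by norm_num)]
        ring
      have hβ2 : β ^ 2 = s ^ 2 * (1 - r) / 2 := by
        rw [hβ, div_pow, mul_pow, hc2]
        ring
      have hE2 : (2 * (Real.sqrt (2 * Real.pi))⁻¹) ^ 2 = 2 / Real.pi := by
        rw [mul_pow, inv_pow, hsq2pi]
        have hpi := Real.pi_ne_zero
        field_simp
      rw [mul_pow, hα2, hβ2, hE2]
      field_simp
      ring
    exact hgoal
end

section
/- (Mean of the maximum of three independent centered Gaussians with unequal variances.) Let Z_1, Z_2, Z_3 be independent standard normal random variables and let s_1, s_2, s_3 > 0. Then E[ max(s_1 Z_1, s_2 Z_2, s_3 Z_3) ] = (1/(2√(2π))) Σ_{1≤i<h≤3} √(s_i² + s_h²). -/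
open MeasureTheory ProbabilityTheory Filter
open scoped NNReal ENNReal
open Real Set

lemma integral_abs_cos : ∫ θ in (-π)..π, |Real.cos θ| = 4 := by
  have h1 : ∫ θ in (-π)..(-(π/2)), |Real.cos θ| = 1 := by
    rw [intervalIntegral.integral_congr (g := fun θ => -Real.cos θ)]
    · rw [intervalIntegral.integral_neg, integral_cos]
      simp
    · intro x hx
      rw [uIcc_of_le (by linarith [pi_pos])] at hx
      show |Real.cos x| = -Real.cos x
      rw [abs_of_nonpos]
      rw [← Real.cos_neg]
      exact Real.cos_nonpos_of_pi_div_two_le_of_le (by linarith [hx.2]) (by linarith [hx.1, pi_pos])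
  have h2 : ∫ θ in (-(π/2))..(π/2), |Real.cos θ| = 2 := by
    rw [intervalIntegral.integral_congr (g := fun θ => Real.cos θ)]
    · rw [integral_cos]; norm_num
    · intro x hx
      rw [uIcc_of_le (by linarith [pi_pos])] at hx
      exact abs_of_nonneg (Real.cos_nonneg_of_mem_Icc ⟨hx.1, hx.2⟩)
  have h3 : ∫ θ in (π/2)..π, |Real.cos θ| = 1 := by
    rw [intervalIntegral.integral_congr (g := fun θ => -Real.cos θ)]
    · rw [intervalIntegral.integral_neg, integral_cos]
      simp
    · intro x hx
      rw [uIcc_of_le (by linarith [pi_pos])] at hx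
      show |Real.cos x| = -Real.cos x
      rw [abs_of_nonpos]
      exact Real.cos_nonpos_of_pi_div_two_le_of_le hx.1 (by linarith [hx.2, pi_pos])
  have i1 : IntervalIntegrable (fun θ => |Real.cos θ|) volume (-π) (-(π/2)) :=
    (Real.continuous_cos.abs.intervalIntegrable _ _)
  have i2 : IntervalIntegrable (fun θ => |Real.cos θ|) volume (-(π/2)) (π/2) :=
    (Real.continuous_cos.abs.intervalIntegrable _ _)
  have i3 : IntervalIntegrable (fun θ => |Real.cos θ|) volume (π/2) π :=
    (Real.continuous_cos.abs.intervalIntegrable _ _)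
  rw [← intervalIntegral.integral_add_adjacent_intervals (i1.trans i2) i3,
    ← intervalIntegral.integral_add_adjacent_intervals i1 i2, h1, h2, h3]
  norm_num

lemma integral_abs_cos_sin {a b : ℝ} (ha : 0 < a) (hb : 0 < b) :
    ∫ θ in (-π)..π, |a * Real.cos θ - b * Real.sin θ| = 4 * Real.sqrt (a^2+b^2) := by
  set c := Real.sqrt (a^2+b^2) with hc
  have hcsq : c^2 = a^2 + b^2 := Real.sq_sqrt (by positivity)
  have hc0 : 0 < c := Real.sqrt_pos.mpr (by positivity)
  set φ := Real.arcsin (b / c) with hφ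
  have hb1 : b / c ≤ 1 := by
    rw [div_le_one hc0]
    nlinarith
  have hbc0 : (0:ℝ) ≤ b / c := by positivity
  have hsin : Real.sin φ = b / c :=
    Real.sin_arcsin (by linarith) hb1
  have hcos : Real.cos φ = a / c := by
    rw [hφ, Real.cos_arcsin, div_pow, hcsq]
    rw [show 1 - b^2/(a^2+b^2) = (a/c)^2 by rw [div_pow, hcsq]; field_simp; ring]
    exact Real.sqrt_sq (by positivity)
  have key : ∀ θ, a * Real.cos θ - b * Real.sin θ = c * Real.cos (θ + φ) := by
    intro θ
    rw [Real.cos_add, hcos, hsin]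
    field_simp
  have hper : Function.Periodic (fun u => |Real.cos u|) (2*π) := by
    intro x
    simp [Real.cos_periodic x]
  calc ∫ θ in (-π)..π, |a * Real.cos θ - b * Real.sin θ|
      = ∫ θ in (-π)..π, c * |Real.cos (θ + φ)| := by
        apply intervalIntegral.integral_congr
        intro x _
        show |a * Real.cos x - b * Real.sin x| = c * |Real.cos (x + φ)|
        rw [key x, abs_mul, abs_of_pos hc0]
    _ = c * ∫ θ in (-π)..π, |Real.cos (θ + φ)| := intervalIntegral.integral_const_mul _ _
    _ = c * ∫ u in (-π+φ)..(π+φ), |Real.cos u| := by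
        rw [intervalIntegral.integral_comp_add_right (fun u => |Real.cos u|) φ]
    _ = c * ∫ u in (-π)..π, |Real.cos u| := by
        congr 1
        have := hper.intervalIntegral_add_eq (-π+φ) (-π)
        rw [show -π+φ+2*π = π+φ by ring, show -π+2*π = π by ring] at this
        exact this
    _ = 4 * c := by rw [integral_abs_cos]; ring

lemma integral_sq_mul_exp : ∫ r in Ioi (0:ℝ), r^2 * Real.exp (-r^2/2) = Real.sqrt (π/2) := by
  calc ∫ r in Ioi (0:ℝ), r^2 * Real.exp (-r^2/2)
      = ∫ x in Ioi (0:ℝ), x ^ (2:ℝ) * Real.exp (-(1/2) * x ^ (2:ℝ)) := by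
        refine setIntegral_congr_fun measurableSet_Ioi (fun x hx => ?_)
        rw [show x ^ (2:ℝ) = x^2 from by
          rw [show (2:ℝ) = ((2:ℕ):ℝ) by norm_num, Real.rpow_natCast]]
        ring_nf
    _ = (1/2:ℝ) ^ (-((2:ℝ)+1)/2 : ℝ) * (1/2) * Real.Gamma (((2:ℝ)+1)/2) :=
        integral_rpow_mul_exp_neg_mul_rpow two_pos (by norm_num) (by norm_num)
    _ = Real.sqrt (π/2) := by
        rw [show (((2:ℝ))+1)/2 = 1/2 + 1 by norm_num, Real.Gamma_add_one (by norm_num),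
          Real.Gamma_one_half_eq]
        rw [show ((1:ℝ)/2) = (2:ℝ)⁻¹ by norm_num,
          Real.inv_rpow (by norm_num), ← Real.rpow_neg (by norm_num)]
        rw [show (-(-((2:ℝ)+1)/2) : ℝ) = 1 + 1/2 by norm_num,
          Real.rpow_add (by norm_num), Real.rpow_one, ← Real.sqrt_eq_rpow]
        have h2 : Real.sqrt 2 * Real.sqrt 2 = 2 := Real.mul_self_sqrt (by norm_num)
        have h2' : Real.sqrt 2 ≠ 0 := by positivity
        rw [show Real.sqrt (π/2) = Real.sqrt π / Real.sqrt 2 from Real.sqrt_div pi_pos.le 2]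
        field_simp
        nlinarith [Real.sqrt_nonneg π]

lemma gauss_pair : (gaussianReal 0 1).prod (gaussianReal 0 1)
    = (volume : Measure (ℝ×ℝ)).withDensity
        (fun p => gaussianPDF 0 1 p.1 * gaussianPDF 0 1 p.2) := by
  have hfin : IsFiniteMeasure (volume.withDensity (gaussianPDF 0 1)) := by
    rw [← gaussianReal_of_var_ne_zero 0 one_ne_zero]; infer_instance
  rw [gaussianReal_of_var_ne_zero 0 one_ne_zero]
  refine Measure.prod_eq fun s t hs ht => ?_
  rw [withDensity_apply _ (hs.prod ht), Measure.volume_eq_prod, ← Measure.prod_restrict,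
    lintegral_prod_mul (f := gaussianPDF 0 1) (g := gaussianPDF 0 1)
      (measurable_gaussianPDF 0 1).aemeasurable (measurable_gaussianPDF 0 1).aemeasurable,
    withDensity_apply _ hs, withDensity_apply _ ht]

lemma gauss_density_eq (x : ℝ) :
    gaussianPDFReal 0 1 x = (Real.sqrt (2*π))⁻¹ * Real.exp (-x^2/2) := by
  simp [gaussianPDFReal]

lemma pair_abs_integral {a b : ℝ} (ha : 0 < a) (hb : 0 < b) :
    ∫ p : ℝ × ℝ, |a * p.1 - b * p.2| ∂((gaussianReal 0 1).prod (gaussianReal 0 1))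
      = Real.sqrt (a^2+b^2) * Real.sqrt (2/π) := by
  set g : ℝ → ℝ := gaussianPDFReal 0 1 with hgdef
  have hgm : Measurable g := measurable_gaussianPDFReal 0 1
  have hgnn : ∀ x, 0 ≤ g x := gaussianPDFReal_nonneg 0 1
  have hD : Measurable (fun p : ℝ×ℝ => (g p.1).toNNReal * (g p.2).toNNReal) :=
    ((hgm.comp measurable_fst).real_toNNReal).mul ((hgm.comp measurable_snd).real_toNNReal)
  have step1 : ∫ p : ℝ × ℝ, |a * p.1 - b * p.2| ∂((gaussianReal 0 1).prod (gaussianReal 0 1))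
      = ∫ p : ℝ×ℝ, (g p.1 * g p.2) * |a * p.1 - b * p.2| := by
    rw [gauss_pair,
      show (fun p : ℝ×ℝ => gaussianPDF 0 1 p.1 * gaussianPDF 0 1 p.2)
        = fun p : ℝ×ℝ => ((((g p.1).toNNReal * (g p.2).toNNReal) : ℝ≥0) : ℝ≥0∞) from by
          funext p
          rw [ENNReal.coe_mul]
          rfl,
      integral_withDensity_eq_integral_smul hD]
    congr 1
    funext p
    rw [NNReal.smul_def, NNReal.coe_mul, Real.coe_toNNReal _ (hgnn _),
      Real.coe_toNNReal _ (hgnn _), smul_eq_mul]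
  have step2 : ∫ p : ℝ×ℝ, (g p.1 * g p.2) * |a * p.1 - b * p.2|
      = ∫ q in polarCoord.target,
          q.1 • ((g (q.1 * Real.cos q.2) * g (q.1 * Real.sin q.2))
            * |a * (q.1 * Real.cos q.2) - b * (q.1 * Real.sin q.2)|) := by
    rw [← integral_comp_polarCoord_symm (fun p => (g p.1 * g p.2) * |a * p.1 - b * p.2|)]
    rfl
  have step3 : ∫ q in polarCoord.target,
          q.1 • ((g (q.1 * Real.cos q.2) * g (q.1 * Real.sin q.2))
            * |a * (q.1 * Real.cos q.2) - b * (q.1 * Real.sin q.2)|)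
      = ∫ q in Ioi (0:ℝ) ×ˢ Ioo (-π) π,
          ((2*π)⁻¹ * (q.1^2 * Real.exp (-q.1^2/2))) * |a * Real.cos q.2 - b * Real.sin q.2| := by
    rw [polarCoord_target]
    refine setIntegral_congr_fun (measurableSet_Ioi.prod measurableSet_Ioo) (fun q hq => ?_)
    obtain ⟨hr, hθ⟩ := hq
    simp only [smul_eq_mul]
    have hr0 : (0:ℝ) < q.1 := hr
    have habs : |a * (q.1 * Real.cos q.2) - b * (q.1 * Real.sin q.2)|
        = q.1 * |a * Real.cos q.2 - b * Real.sin q.2| := by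
      rw [show a * (q.1 * Real.cos q.2) - b * (q.1 * Real.sin q.2)
          = q.1 * (a * Real.cos q.2 - b * Real.sin q.2) by ring, abs_mul, abs_of_pos hr0]
    have hgg : g (q.1 * Real.cos q.2) * g (q.1 * Real.sin q.2)
        = (2*π)⁻¹ * Real.exp (-q.1^2/2) := by
      rw [hgdef, gauss_density_eq, gauss_density_eq]
      have h1 : -(q.1 * Real.cos q.2)^2/2 + -(q.1 * Real.sin q.2)^2/2 = -q.1^2/2 := by
        have := Real.sin_sq_add_cos_sq q.2
        nlinarith [this]
      have : (Real.sqrt (2*π))⁻¹ * Real.exp (-(q.1 * Real.cos q.2)^2/2) *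
          ((Real.sqrt (2*π))⁻¹ * Real.exp (-(q.1 * Real.sin q.2)^2/2)) =
          ((Real.sqrt (2*π)) * (Real.sqrt (2*π)))⁻¹ *
          (Real.exp (-(q.1 * Real.cos q.2)^2/2) * Real.exp (-(q.1 * Real.sin q.2)^2/2)) := by
        rw [mul_inv]; ring
      rw [this, ← Real.exp_add, h1, Real.mul_self_sqrt (by positivity)]
    rw [habs, hgg]
    ring
  have step4 : ∫ q in Ioi (0:ℝ) ×ˢ Ioo (-π) π,
          ((2*π)⁻¹ * (q.1^2 * Real.exp (-q.1^2/2))) * |a * Real.cos q.2 - b * Real.sin q.2|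
      = ((2*π)⁻¹ * Real.sqrt (π/2)) * (4 * Real.sqrt (a^2+b^2)) := by
    rw [Measure.volume_eq_prod,
      setIntegral_prod_mul (fun r => (2*π)⁻¹ * (r^2 * Real.exp (-r^2/2)))
      (fun θ => |a * Real.cos θ - b * Real.sin θ|)]
    have hrad : ∫ r in Ioi (0:ℝ), (2*π)⁻¹ * (r^2 * Real.exp (-r^2/2))
        = (2*π)⁻¹ * Real.sqrt (π/2) := by
      rw [integral_const_mul, integral_sq_mul_exp]
    have hang : ∫ θ in Ioo (-π) π, |a * Real.cos θ - b * Real.sin θ|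
        = 4 * Real.sqrt (a^2+b^2) := by
      rw [← integral_Ioc_eq_integral_Ioo, ← intervalIntegral.integral_of_le (by linarith [pi_pos])]
      exact integral_abs_cos_sin ha hb
    rw [hrad, hang]
  rw [step1, step2, step3, step4]
  have h2 : Real.sqrt 2 * Real.sqrt 2 = 2 := Real.mul_self_sqrt (by norm_num)
  have hπ : Real.sqrt π * Real.sqrt π = π := Real.mul_self_sqrt pi_pos.le
  have h2' : Real.sqrt 2 ≠ 0 := by positivity
  have hπ' : Real.sqrt π ≠ 0 := by positivity
  rw [show Real.sqrt (π/2) = Real.sqrt π / Real.sqrt 2 from Real.sqrt_div pi_pos.le 2,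
    show Real.sqrt (2/π) = Real.sqrt 2 / Real.sqrt π from Real.sqrt_div (by norm_num) π]
  field_simp
  linear_combination 4 * hπ - (2*π) * h2

lemma integrable_id_gauss : Integrable (fun x : ℝ => x) (gaussianReal 0 1) := by
  rw [gaussianReal_of_var_ne_zero 0 one_ne_zero,
    integrable_withDensity_iff (measurable_gaussianPDF 0 1)
      (ae_of_all _ fun x => ENNReal.ofReal_lt_top)]
  have : (fun x : ℝ => x * (gaussianPDF 0 1 x).toReal)
      = fun x => (Real.sqrt (2*π))⁻¹ * (x * Real.exp (-(1/2) * x^2)) := by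
    funext x
    rw [gaussianPDF, ENNReal.toReal_ofReal (gaussianPDFReal_nonneg 0 1 x), gauss_density_eq]
    rw [show -(1/2) * x^2 = -x^2/2 by ring]
    ring
  rw [this]
  exact (integrable_mul_exp_neg_mul_sq (by norm_num : (0:ℝ) < 1/2)).const_mul _

lemma gauss_map_neg : Measure.map (fun x : ℝ => -x) (gaussianReal 0 1) = gaussianReal 0 1 := by
  have h := gaussianReal_map_const_mul (μ := 0) (v := 1) (-1)
  rw [show (fun x : ℝ => -x) = ((-1 : ℝ) * ·) by funext x; ring] at *
  rw [h]
  congr 1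
  · norm_num
  · ext
    norm_num

lemma max_min_identity (x y z : ℝ) :
    max x (max y z) = (|x - y| + |x - z| + |y - z|)/2 + min x (min y z) := by
  simp only [abs_eq_max_neg, max_def, min_def]
  split_ifs <;> linarith

/-- **Mean of the maximum of three independent centered Gaussians with unequal
variances.** If `Z 0, Z 1, Z 2` are independent standard normals and
`s₁, s₂, s₃ > 0`, then
`E[max(s₁Z₁, s₂Z₂, s₃Z₃)] = (1/(2√(2π))) Σ_{1≤i<h≤3} √(s_i² + s_h²)`. -/
theorem mean_max_three_indep_gaussians {Ω : Type*} [MeasureSpace Ω]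
    [IsProbabilityMeasure (ℙ : Measure Ω)]
    (Z : Fin 3 → Ω → ℝ) (hm : ∀ j, Measurable (Z j))
    (hg : ∀ j, Measure.map (Z j) ℙ = gaussianReal 0 1)
    (hindep : iIndepFun Z ℙ)
    (s₁ s₂ s₃ : ℝ) (hs₁ : 0 < s₁) (hs₂ : 0 < s₂) (hs₃ : 0 < s₃) :
    (∫ ω, max (s₁ * Z 0 ω) (max (s₂ * Z 1 ω) (s₃ * Z 2 ω)) ∂ℙ)
      = (1 / (2 * Real.sqrt (2 * Real.pi))) *
          (Real.sqrt (s₁ ^ 2 + s₂ ^ 2) + Real.sqrt (s₁ ^ 2 + s₃ ^ 2)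
            + Real.sqrt (s₂ ^ 2 + s₃ ^ 2)) := by
  set ν : Measure (ℝ × ℝ × ℝ) :=
    (gaussianReal 0 1).prod ((gaussianReal 0 1).prod (gaussianReal 0 1)) with hν
  set F : ℝ × ℝ × ℝ → ℝ := fun p => max (s₁ * p.1) (max (s₂ * p.2.1) (s₃ * p.2.2)) with hF
  have hFc : Continuous F := by
    apply Continuous.max
    · exact continuous_const.mul continuous_fst
    · exact (continuous_const.mul (continuous_fst.comp continuous_snd)).max
        (continuous_const.mul (continuous_snd.comp continuous_snd))
  -- joint law
  have hpm : Measurable (fun ω => (Z 1 ω, Z 2 ω)) := (hm 1).prodMk (hm 2)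
  have h12 : IndepFun (Z 1) (Z 2) ℙ := hindep.indepFun (by decide)
  have hmap12 : Measure.map (fun ω => (Z 1 ω, Z 2 ω)) ℙ
      = (gaussianReal 0 1).prod (gaussianReal 0 1) := by
    rw [(indepFun_iff_map_prod_eq_prod_map_map (hm 1).aemeasurable (hm 2).aemeasurable).mp h12,
      hg 1, hg 2]
  have h0p : IndepFun (Z 0) (fun ω => (Z 1 ω, Z 2 ω)) ℙ :=
    (hindep.indepFun_prodMk hm 1 2 0 (by decide) (by decide)).symm
  have hjoint : Measure.map (fun ω => (Z 0 ω, (Z 1 ω, Z 2 ω))) ℙ = ν := by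
    rw [(indepFun_iff_map_prod_eq_prod_map_map (hm 0).aemeasurable hpm.aemeasurable).mp h0p,
      hg 0, hmap12]
  have hLHS : (∫ ω, max (s₁ * Z 0 ω) (max (s₂ * Z 1 ω) (s₃ * Z 2 ω)) ∂ℙ) = ∫ p, F p ∂ν := by
    rw [← hjoint, integral_map ((hm 0).prodMk hpm).aemeasurable hFc.aestronglyMeasurable]
  -- marginals
  have m1 : Measure.map Prod.fst ν = gaussianReal 0 1 := by
    rw [hν, Measure.map_fst_prod]; simp
  have m23 : Measure.map Prod.snd ν = (gaussianReal 0 1).prod (gaussianReal 0 1) := by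
    rw [hν, Measure.map_snd_prod]; simp
  have m2 : Measure.map (fun p : ℝ×ℝ×ℝ => p.2.1) ν = gaussianReal 0 1 := by
    rw [show (fun p : ℝ×ℝ×ℝ => p.2.1) = Prod.fst ∘ Prod.snd from rfl,
      ← Measure.map_map measurable_fst measurable_snd, m23, Measure.map_fst_prod]
    simp
  have m3 : Measure.map (fun p : ℝ×ℝ×ℝ => p.2.2) ν = gaussianReal 0 1 := by
    rw [show (fun p : ℝ×ℝ×ℝ => p.2.2) = Prod.snd ∘ Prod.snd from rfl,
      ← Measure.map_map measurable_snd measurable_snd, m23, Measure.map_snd_prod]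
    simp
  have m12 : Measure.map (fun p : ℝ×ℝ×ℝ => (p.1, p.2.1)) ν
      = (gaussianReal 0 1).prod (gaussianReal 0 1) := by
    rw [show (fun p : ℝ×ℝ×ℝ => (p.1, p.2.1)) = Prod.map id Prod.fst from rfl, hν,
      ← Measure.map_prod_map _ _ measurable_id measurable_fst, Measure.map_id,
      Measure.map_fst_prod]
    simp
  have m13 : Measure.map (fun p : ℝ×ℝ×ℝ => (p.1, p.2.2)) ν
      = (gaussianReal 0 1).prod (gaussianReal 0 1) := by
    rw [show (fun p : ℝ×ℝ×ℝ => (p.1, p.2.2)) = Prod.map id Prod.snd from rfl, hν,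
      ← Measure.map_prod_map _ _ measurable_id measurable_snd, Measure.map_id,
      Measure.map_snd_prod]
    simp
  -- coordinate integrability
  have ic1 : Integrable (fun p : ℝ×ℝ×ℝ => p.1) ν := by
    have h : Integrable (fun x : ℝ => x) (Measure.map Prod.fst ν) := m1 ▸ integrable_id_gauss
    exact (integrable_map_measure aestronglyMeasurable_id measurable_fst.aemeasurable).mp h
  have ic2 : Integrable (fun p : ℝ×ℝ×ℝ => p.2.1) ν := by
    have h : Integrable (fun x : ℝ => x) (Measure.map (fun p : ℝ×ℝ×ℝ => p.2.1) ν) :=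
      m2 ▸ integrable_id_gauss
    exact (integrable_map_measure aestronglyMeasurable_id
      (measurable_fst.comp measurable_snd).aemeasurable).mp h
  have ic3 : Integrable (fun p : ℝ×ℝ×ℝ => p.2.2) ν := by
    have h : Integrable (fun x : ℝ => x) (Measure.map (fun p : ℝ×ℝ×ℝ => p.2.2) ν) :=
      m3 ▸ integrable_id_gauss
    exact (integrable_map_measure aestronglyMeasurable_id
      (measurable_snd.comp measurable_snd).aemeasurable).mp h
  have iab12 : Integrable (fun p : ℝ×ℝ×ℝ => |s₁*p.1 - s₂*p.2.1|) ν :=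
    ((ic1.const_mul s₁).sub (ic2.const_mul s₂)).abs
  have iab13 : Integrable (fun p : ℝ×ℝ×ℝ => |s₁*p.1 - s₃*p.2.2|) ν :=
    ((ic1.const_mul s₁).sub (ic3.const_mul s₃)).abs
  have iab23 : Integrable (fun p : ℝ×ℝ×ℝ => |s₂*p.2.1 - s₃*p.2.2|) ν :=
    ((ic2.const_mul s₂).sub (ic3.const_mul s₃)).abs
  have icmin : Integrable (fun p : ℝ×ℝ×ℝ => min (s₁*p.1) (min (s₂*p.2.1) (s₃*p.2.2))) ν := by
    have h1 : Integrable (fun p : ℝ×ℝ×ℝ => min (s₂*p.2.1) (s₃*p.2.2)) ν := by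
      have := (ic2.const_mul s₂).inf (ic3.const_mul s₃)
      exact this
    have := (ic1.const_mul s₁).inf h1
    exact this
  -- abs diff integrals
  have e12 : ∫ p, |s₁*p.1 - s₂*p.2.1| ∂ν = Real.sqrt (s₁^2+s₂^2) * Real.sqrt (2/π) := by
    have hsm : AEStronglyMeasurable (fun q : ℝ×ℝ => |s₁*q.1 - s₂*q.2|)
        (Measure.map (fun p : ℝ×ℝ×ℝ => (p.1, p.2.1)) ν) :=
      (Continuous.abs (by fun_prop)).aestronglyMeasurable
    have h := integral_map (φ := fun p : ℝ×ℝ×ℝ => (p.1, p.2.1))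
      (measurable_fst.prodMk (measurable_fst.comp measurable_snd)).aemeasurable hsm
    rw [m12, pair_abs_integral hs₁ hs₂] at h
    simpa using h.symm
  have e13 : ∫ p, |s₁*p.1 - s₃*p.2.2| ∂ν = Real.sqrt (s₁^2+s₃^2) * Real.sqrt (2/π) := by
    have hsm : AEStronglyMeasurable (fun q : ℝ×ℝ => |s₁*q.1 - s₃*q.2|)
        (Measure.map (fun p : ℝ×ℝ×ℝ => (p.1, p.2.2)) ν) :=
      (Continuous.abs (by fun_prop)).aestronglyMeasurable
    have h := integral_map (φ := fun p : ℝ×ℝ×ℝ => (p.1, p.2.2))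
      (measurable_fst.prodMk (measurable_snd.comp measurable_snd)).aemeasurable hsm
    rw [m13, pair_abs_integral hs₁ hs₃] at h
    simpa using h.symm
  have e23 : ∫ p, |s₂*p.2.1 - s₃*p.2.2| ∂ν = Real.sqrt (s₂^2+s₃^2) * Real.sqrt (2/π) := by
    have hsm : AEStronglyMeasurable (fun q : ℝ×ℝ => |s₂*q.1 - s₃*q.2|)
        (Measure.map (Prod.snd : ℝ×ℝ×ℝ → ℝ×ℝ) ν) :=
      (Continuous.abs (by fun_prop)).aestronglyMeasurable
    have h := integral_map (φ := (Prod.snd : ℝ×ℝ×ℝ → ℝ×ℝ)) measurable_snd.aemeasurable hsm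
    rw [m23, pair_abs_integral hs₂ hs₃] at h
    simpa using h.symm
  -- neg invariance
  have hNmeas : Measurable (fun p : ℝ×ℝ×ℝ => ((-p.1, (-p.2.1, -p.2.2)) : ℝ×ℝ×ℝ)) := by fun_prop
  have hmapN : Measure.map (fun p : ℝ×ℝ×ℝ => ((-p.1, (-p.2.1, -p.2.2)) : ℝ×ℝ×ℝ)) ν = ν := by
    rw [show (fun p : ℝ×ℝ×ℝ => ((-p.1, (-p.2.1, -p.2.2)) : ℝ×ℝ×ℝ))
        = Prod.map (fun x : ℝ => -x) (Prod.map (fun x : ℝ => -x) (fun x : ℝ => -x)) from rfl, hν,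
      ← Measure.map_prod_map _ _ measurable_neg (measurable_neg.prodMap measurable_neg),
      ← Measure.map_prod_map _ _ measurable_neg measurable_neg, gauss_map_neg]
  have hnegint : ∫ p, F (-p.1, (-p.2.1, -p.2.2)) ∂ν = ∫ p, F p ∂ν := by
    calc ∫ p, F (-p.1, (-p.2.1, -p.2.2)) ∂ν
        = ∫ q, F q ∂(Measure.map (fun p : ℝ×ℝ×ℝ => ((-p.1, (-p.2.1, -p.2.2)) : ℝ×ℝ×ℝ)) ν) :=
          (integral_map hNmeas.aemeasurable hFc.aestronglyMeasurable).symm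
      _ = ∫ p, F p ∂ν := by rw [hmapN]
  have hmin_int : ∫ p, min (s₁*p.1) (min (s₂*p.2.1) (s₃*p.2.2)) ∂ν = - ∫ p, F p ∂ν := by
    have hGF : (fun p : ℝ×ℝ×ℝ => min (s₁*p.1) (min (s₂*p.2.1) (s₃*p.2.2)))
        = fun p : ℝ×ℝ×ℝ => -F (-p.1, (-p.2.1, -p.2.2)) := by
      funext p
      simp only [hF, mul_neg, max_neg_neg, neg_neg]
    rw [hGF, integral_neg, hnegint]
  -- split
  have hsplit : ∫ p, F p ∂ν
      = (∫ p, |s₁*p.1 - s₂*p.2.1| ∂ν + ∫ p, |s₁*p.1 - s₃*p.2.2| ∂ν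
          + ∫ p, |s₂*p.2.1 - s₃*p.2.2| ∂ν)/2
        + ∫ p, min (s₁*p.1) (min (s₂*p.2.1) (s₃*p.2.2)) ∂ν := by
    have ihalf : Integrable (fun p : ℝ×ℝ×ℝ =>
        (|s₁*p.1 - s₂*p.2.1| + |s₁*p.1 - s₃*p.2.2| + |s₂*p.2.1 - s₃*p.2.2|)/2) ν :=
      ((iab12.add iab13).add iab23).div_const 2
    have hfe : ∫ p, F p ∂ν = ∫ p,
        ((|s₁*p.1 - s₂*p.2.1| + |s₁*p.1 - s₃*p.2.2| + |s₂*p.2.1 - s₃*p.2.2|)/2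
          + min (s₁*p.1) (min (s₂*p.2.1) (s₃*p.2.2))) ∂ν :=
      integral_congr_ae (Filter.Eventually.of_forall fun p => max_min_identity _ _ _)
    rw [hfe, integral_add ihalf icmin]
    congr 1
    have i1213 : Integrable (fun p : ℝ×ℝ×ℝ => |s₁*p.1 - s₂*p.2.1| + |s₁*p.1 - s₃*p.2.2|) ν :=
      iab12.add iab13
    rw [integral_div, integral_add i1213 iab23, integral_add iab12 iab13]
  -- finish
  rw [hLHS]
  have hA : ∫ p, F p ∂ν = ((Real.sqrt (s₁^2+s₂^2) + Real.sqrt (s₁^2+s₃^2)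
      + Real.sqrt (s₂^2+s₃^2)) * Real.sqrt (2/π))/4 := by
    rw [hmin_int, e12, e13, e23] at hsplit
    linarith [hsplit]
  have h2 : Real.sqrt 2 * Real.sqrt 2 = 2 := Real.mul_self_sqrt (by norm_num)
  have h2' : Real.sqrt 2 ≠ 0 := by positivity
  have hπ' : Real.sqrt π ≠ 0 := by positivity
  have hconst : Real.sqrt (2/π) / 4 = 1 / (2 * Real.sqrt (2*π)) := by
    rw [show Real.sqrt (2/π) = Real.sqrt 2 / Real.sqrt π from Real.sqrt_div (by norm_num) π,
      show Real.sqrt (2*π) = Real.sqrt 2 * Real.sqrt π from Real.sqrt_mul (by norm_num) π]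
    field_simp
    linear_combination 2 * h2
  rw [hA, mul_div_assoc, hconst, mul_comm]
end

section
/- (Edgeworth expansion of the mean.) Let (Z_k)_{k≥1} be i.i.d. real random variables whose moment generating function M(t) := E[e^{t Z_1}] is finite on a neighborhood of 0, with cumulants κ_1, κ_2, κ_3 (the first three derivatives at 0 of K := log M). Define ρ_n := exp( (1/n) Σ_{k=1}^n Z_k ) and ρ_∞ := e^{κ_1}. Then E[ρ_n] = M(1/n)^n for all n large enough, and n² ( E[ρ_n]/ρ_∞ − 1 − κ_2/(2n) ) → κ_3/6 + κ_2²/8 as n → ∞; equivalently, E[ρ_n] = ρ_∞ ( 1 + κ_2/(2n) + (κ_3/6 + κ_2²/8)/n² + o(n^{-2}) ). -/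
open MeasureTheory ProbabilityTheory Filter Real Topology

private lemma aux_exp_abs_le (y : ℝ) : Real.exp |y| ≤ Real.exp y + Real.exp (-y) := by
  rcases abs_cases y with ⟨h, _⟩ | ⟨h, _⟩
  · rw [h]; exact le_add_of_nonneg_right (Real.exp_pos _).le
  · rw [h]; exact le_add_of_nonneg_left (Real.exp_pos _).le

private lemma aux_bound (k : ℕ) {δ : ℝ} (hδ : 0 < δ) (t x : ℝ) :
    |x| ^ k * Real.exp (t * x) ≤
      (k.factorial * δ⁻¹ ^ k) * (Real.exp ((t + δ) * x) + Real.exp ((t - δ) * x)) := by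
  have h0 : |x| ^ k ≤ k.factorial * δ⁻¹ ^ k * Real.exp (δ * |x|) := by
    have h1 := Real.pow_div_factorial_le_exp (x := δ * |x|) (by positivity) k
    rw [div_le_iff₀ (by positivity)] at h1
    have h2 : |x| ^ k = δ⁻¹ ^ k * (δ * |x|) ^ k := by
      rw [mul_pow, ← mul_assoc, ← mul_pow, inv_mul_cancel₀ hδ.ne', one_pow, one_mul]
    rw [h2]
    calc δ⁻¹ ^ k * (δ * |x|) ^ k ≤ δ⁻¹ ^ k * (Real.exp (δ * |x|) * k.factorial) := by
          gcongr
      _ = k.factorial * δ⁻¹ ^ k * Real.exp (δ * |x|) := by ring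
  calc |x| ^ k * Real.exp (t * x)
      ≤ (k.factorial * δ⁻¹ ^ k * Real.exp (δ * |x|)) * Real.exp (t * x) := by
        gcongr
    _ = (k.factorial * δ⁻¹ ^ k) * Real.exp (δ * |x| + t * x) := by
        rw [Real.exp_add]; ring
    _ ≤ (k.factorial * δ⁻¹ ^ k) * (Real.exp ((t + δ) * x) + Real.exp ((t - δ) * x)) := by
        have hC : (0:ℝ) ≤ k.factorial * δ⁻¹ ^ k := by positivity
        refine mul_le_mul_of_nonneg_left ?_ hC
        rcases le_total 0 x with hx | hx
        · have : δ * |x| + t * x = (t + δ) * x := by rw [abs_of_nonneg hx]; ring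
          rw [this]; exact le_add_of_nonneg_right (Real.exp_pos _).le
        · have : δ * |x| + t * x = (t - δ) * x := by rw [abs_of_nonpos hx]; ring
          rw [this]; exact le_add_of_nonneg_left (Real.exp_pos _).le

private lemma integrable_abs_pow_exp {Ω : Type*} [MeasureSpace Ω]
    [IsProbabilityMeasure (ℙ : Measure Ω)]
    {X : Ω → ℝ} (hX : Measurable X) {ε : ℝ}
    (hfin : ∀ t : ℝ, |t| ≤ ε → Integrable (fun ω => Real.exp (t * X ω)) ℙ)
    (k : ℕ) {t : ℝ} (ht : |t| < ε) :
    Integrable (fun ω => |X ω| ^ k * Real.exp (t * X ω)) ℙ := by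
  set δ : ℝ := (ε - |t|) / 2 with hδdef
  have hδ : 0 < δ := by have := abs_nonneg t; simp only [hδdef]; linarith
  have h1 : |t + δ| ≤ ε := by
    have := abs_add_le t δ
    have h2 : |δ| = δ := abs_of_pos hδ
    have := abs_nonneg t
    simp only [hδdef] at *
    nlinarith [abs_add_le t ((ε - |t|)/2)]
  have h2 : |t - δ| ≤ ε := by
    have h3 := abs_sub t δ
    have h4 : |δ| = δ := abs_of_pos hδ
    have := abs_nonneg t
    calc |t - δ| ≤ |t| + |δ| := abs_sub t δ
      _ = |t| + δ := by rw [h4]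
      _ ≤ ε := by simp only [hδdef]; linarith
  refine Integrable.mono' (((hfin _ h1).add (hfin _ h2)).const_mul (k.factorial * δ⁻¹ ^ k))
    ?_ ?_
  · exact ((hX.abs.pow_const k).mul ((hX.const_mul t).exp)).aestronglyMeasurable
  · filter_upwards with ω
    rw [Real.norm_eq_abs, abs_of_nonneg (by positivity)]
    exact aux_bound k hδ t (X ω)

private lemma integrable_pow_exp {Ω : Type*} [MeasureSpace Ω]
    [IsProbabilityMeasure (ℙ : Measure Ω)]
    {X : Ω → ℝ} (hX : Measurable X) {ε : ℝ}
    (hfin : ∀ t : ℝ, |t| ≤ ε → Integrable (fun ω => Real.exp (t * X ω)) ℙ)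
    (k : ℕ) {t : ℝ} (ht : |t| < ε) :
    Integrable (fun ω => X ω ^ k * Real.exp (t * X ω)) ℙ := by
  refine (integrable_abs_pow_exp hX hfin k ht).mono'
    (((hX.pow_const k).mul ((hX.const_mul t).exp)).aestronglyMeasurable) ?_
  filter_upwards with ω
  rw [Real.norm_eq_abs, abs_mul, abs_pow, abs_of_pos (Real.exp_pos _)]

private lemma hasDerivAt_int_pow_exp {Ω : Type*} [MeasureSpace Ω]
    [IsProbabilityMeasure (ℙ : Measure Ω)]
    {X : Ω → ℝ} (hX : Measurable X) {ε : ℝ} (hε : 0 < ε)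
    (hfin : ∀ t : ℝ, |t| ≤ ε → Integrable (fun ω => Real.exp (t * X ω)) ℙ)
    (k : ℕ) {t : ℝ} (ht : |t| < ε / 2) :
    HasDerivAt (fun u => ∫ ω, X ω ^ k * Real.exp (u * X ω) ∂ℙ)
      (∫ ω, X ω ^ (k + 1) * Real.exp (t * X ω) ∂ℙ) t := by
  have hε2 : |ε / 2| < ε := by rw [abs_of_pos (half_pos hε)]; linarith
  have hε2' : |-(ε / 2)| < ε := by rw [abs_neg, abs_of_pos (half_pos hε)]; linarith
  set bound : Ω → ℝ := fun ω => |X ω| ^ (k + 1) * Real.exp (ε / 2 * X ω)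
      + |X ω| ^ (k + 1) * Real.exp (-(ε / 2) * X ω) with hbd
  have hbint : Integrable bound ℙ :=
    (integrable_abs_pow_exp hX hfin (k + 1) hε2).add
      (integrable_abs_pow_exp hX hfin (k + 1) hε2')
  have hεpos : 0 < ε / 2 - |t| := by linarith
  have key := hasDerivAt_integral_of_dominated_loc_of_deriv_le (μ := ℙ)
      (F := fun u ω => X ω ^ k * Real.exp (u * X ω))
      (F' := fun u ω => X ω ^ (k + 1) * Real.exp (u * X ω))
      (bound := bound) (Metric.ball_mem_nhds t hεpos)
      (Filter.Eventually.of_forall fun u =>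
        ((hX.pow_const k).mul ((hX.const_mul u).exp)).aestronglyMeasurable)
      (integrable_pow_exp hX hfin k (lt_trans ht (by linarith)))
      (((hX.pow_const (k + 1)).mul ((hX.const_mul t).exp)).aestronglyMeasurable)
      ?_ hbint ?_
  · exact key.2
  · filter_upwards with ω u hu
    have hu2 : |u| ≤ ε / 2 := by
      have h3 := Metric.mem_ball.mp hu
      rw [Real.dist_eq] at h3
      calc |u| = |u - t + t| := by norm_num
        _ ≤ |u - t| + |t| := abs_add_le _ _
        _ ≤ ε / 2 := by linarith
    rw [Real.norm_eq_abs, abs_mul, abs_pow, abs_of_pos (Real.exp_pos _)]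
    have h4 : u * X ω ≤ ε / 2 * |X ω| := by
      calc u * X ω ≤ |u * X ω| := le_abs_self _
        _ = |u| * |X ω| := abs_mul _ _
        _ ≤ ε / 2 * |X ω| := by gcongr
    have h5 : ε / 2 * |X ω| = |ε / 2 * X ω| := by
      rw [abs_mul, abs_of_pos (half_pos hε)]
    calc |X ω| ^ (k + 1) * Real.exp (u * X ω)
        ≤ |X ω| ^ (k + 1) * Real.exp |ε / 2 * X ω| := by
          rw [← h5]; gcongr
      _ ≤ |X ω| ^ (k + 1) * (Real.exp (ε / 2 * X ω) + Real.exp (-(ε / 2 * X ω))) := by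
          gcongr
          exact aux_exp_abs_le _
      _ = bound ω := by rw [hbd]; ring_nf
  · filter_upwards with ω u _
    have h := ((hasDerivAt_mul_const (x := u) (X ω)).exp).const_mul ((X ω) ^ k)
    refine h.congr_deriv ?_
    ring

set_option maxHeartbeats 1000000 in
/-- **Edgeworth expansion of the mean.**
For i.i.d. real random variables `Z k` whose moment generating function
`M(t) = E[e^{tZ}]` is finite on a neighborhood of `0`, with cumulants
`κ_r = (log M)^{(r)}(0)`, the quantity `ρ_n = exp((1/n) Σ_{k<n} Z k)` satisfies
`E[ρ_n] = M(1/n)^n` for all `n` large enough, and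
`n²(E[ρ_n]/ρ∞ − 1 − κ₂/(2n)) → κ₃/6 + κ₂²/8`, where `ρ∞ = e^{κ₁}`;
i.e. `E[ρ_n] = ρ∞ (1 + κ₂/(2n) + (κ₃/6 + κ₂²/8)/n² + o(n⁻²))`. -/
theorem edgeworth_mean_expansion {Ω : Type*} [MeasureSpace Ω]
    [IsProbabilityMeasure (ℙ : Measure Ω)]
    (Z : ℕ → Ω → ℝ) (hmeas : ∀ k, Measurable (Z k))
    (hindep : iIndepFun Z ℙ)
    (hident : ∀ k, Measure.map (Z k) ℙ = Measure.map (Z 0) ℙ)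
    (M : ℝ → ℝ) (hM : ∀ t, M t = ∫ ω, Real.exp (t * Z 0 ω) ∂ℙ)
    (hfin : ∃ ε > (0 : ℝ), ∀ t : ℝ, |t| ≤ ε →
      Integrable (fun ω => Real.exp (t * Z 0 ω)) ℙ)
    (κ1 κ2 κ3 : ℝ)
    (hκ1 : κ1 = iteratedDeriv 1 (fun t => Real.log (M t)) 0)
    (hκ2 : κ2 = iteratedDeriv 2 (fun t => Real.log (M t)) 0)
    (hκ3 : κ3 = iteratedDeriv 3 (fun t => Real.log (M t)) 0)
    (ρ : ℕ → Ω → ℝ)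
    (hρ : ∀ n ω, ρ n ω = Real.exp ((n : ℝ)⁻¹ * ∑ k ∈ Finset.range n, Z k ω))
    (ρlim : ℝ) (hρlim : ρlim = Real.exp κ1) :
    (∀ᶠ n : ℕ in atTop, (∫ ω, ρ n ω ∂ℙ) = M (1 / n) ^ n) ∧
    Tendsto
      (fun n : ℕ => (n : ℝ) ^ 2 * ((∫ ω, ρ n ω ∂ℙ) / ρlim - 1 - κ2 / (2 * n)))
      atTop (nhds (κ3 / 6 + κ2 ^ 2 / 8)) := by
  classical
  obtain ⟨ε, hε, hint⟩ := hfin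
  have hX : Measurable (Z 0) := hmeas 0
  set g : ℕ → ℝ → ℝ := fun k t => ∫ ω, Z 0 ω ^ k * Real.exp (t * Z 0 ω) ∂ℙ with hgdef
  have hg : ∀ (k : ℕ) {t : ℝ}, |t| < ε / 2 → HasDerivAt (g k) (g (k + 1) t) t :=
    fun k t ht => hasDerivAt_int_pow_exp hX hε hint k ht
  have hMg : M = g 0 := by
    funext t; rw [hM]; simp only [hgdef, pow_zero, one_mul]
  have hMpos : ∀ t : ℝ, |t| ≤ ε → 0 < M t := by
    intro t ht
    rw [hM]
    have h := mgf_pos (μ := ℙ) (X := Z 0) (hint t ht)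
    simpa [mgf] using h
  have hgne : ∀ t : ℝ, |t| < ε / 2 → g 0 t ≠ 0 := by
    intro t ht
    rw [← hMg]
    exact (hMpos t (by linarith)).ne'
  set K : ℝ → ℝ := fun t => Real.log (M t) with hKdef
  set L1 : ℝ → ℝ := fun t => g 1 t / g 0 t with hL1def
  set L2 : ℝ → ℝ := fun t => g 2 t / g 0 t - (g 1 t / g 0 t) ^ 2 with hL2def
  set L3 : ℝ → ℝ := fun t => g 3 t / g 0 t - 3 * (g 2 t * g 1 t) / g 0 t ^ 2
      + 2 * (g 1 t / g 0 t) ^ 3 with hL3def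
  have hMd : ∀ {t : ℝ}, |t| < ε / 2 → HasDerivAt M (g 1 t) t := by
    intro t ht; rw [hMg]; exact hg 0 ht
  have hMne : ∀ t : ℝ, |t| < ε / 2 → M t ≠ 0 := fun t ht => (hMpos t (by linarith)).ne'
  have hKd : ∀ {t : ℝ}, |t| < ε / 2 → HasDerivAt K (L1 t) t := by
    intro t ht
    have h := (hMd ht).log (hMne t ht)
    rw [hKdef, hL1def, ← hMg]
    exact h
  have hL1d : ∀ {t : ℝ}, |t| < ε / 2 → HasDerivAt L1 (L2 t) t := by
    intro t ht
    have h := (hg 1 ht).div (hg 0 ht) (hgne t ht)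
    have hne := hgne t ht
    rw [hL1def, hL2def]
    refine h.congr_deriv ?_
    field_simp
  have hL2d : ∀ {t : ℝ}, |t| < ε / 2 → HasDerivAt L2 (L3 t) t := by
    intro t ht
    have h := ((hg 2 ht).div (hg 0 ht) (hgne t ht)).sub
      (((hg 1 ht).div (hg 0 ht) (hgne t ht)).pow 2)
    have hne := hgne t ht
    rw [hL2def, hL3def]
    refine h.congr_deriv ?_
    simp only [Pi.div_apply, Nat.reduceSub, Nat.reduceAdd, pow_one]
    field_simp
    ring
  have h0mem : |(0 : ℝ)| < ε / 2 := by simpa using half_pos hε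
  -- identification of the cumulants
  have hmem : ∀ {t : ℝ}, t ∈ Metric.ball (0 : ℝ) (ε / 2) → |t| < ε / 2 := by
    intro t ht
    simpa [Real.dist_eq] using Metric.mem_ball.mp ht
  have hballn : ∀ {t : ℝ}, |t| < ε / 2 → Metric.ball (0 : ℝ) (ε / 2) ∈ 𝓝 t := by
    intro t ht
    exact Metric.isOpen_ball.mem_nhds (by simpa [Real.dist_eq] using ht)
  have hevK : ∀ {t : ℝ}, |t| < ε / 2 → deriv K =ᶠ[nhds t] L1 := by
    intro t ht
    exact Filter.eventuallyEq_of_mem (hballn ht) (fun s hs => (hKd (hmem hs)).deriv)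
  have hder2 : ∀ {t : ℝ}, |t| < ε / 2 → deriv (deriv K) t = L2 t := by
    intro t ht
    rw [(hevK ht).deriv_eq]
    exact (hL1d ht).deriv
  have hevK2 : ∀ {t : ℝ}, |t| < ε / 2 → deriv (deriv K) =ᶠ[nhds t] L2 := by
    intro t ht
    exact Filter.eventuallyEq_of_mem (hballn ht) (fun s hs => hder2 (hmem hs))
  have hκ1' : κ1 = L1 0 := by
    rw [hκ1, iteratedDeriv_one]
    exact (hKd h0mem).deriv.symm ▸ rfl
  have hκ2' : κ2 = L2 0 := by
    rw [hκ2, iteratedDeriv_succ, iteratedDeriv_one]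
    exact hder2 h0mem
  have hκ3' : κ3 = L3 0 := by
    rw [hκ3, show (3 : ℕ) = 2 + 1 from rfl, iteratedDeriv_succ, iteratedDeriv_succ,
      iteratedDeriv_one]
    rw [(hevK2 h0mem).deriv_eq]
    exact (hL2d h0mem).deriv
  -- continuity facts at 0
  have hL3c : ContinuousAt L3 0 := by
    have hne := hgne 0 h0mem
    have c0 := (hg 0 h0mem).continuousAt
    have c1 := (hg 1 h0mem).continuousAt
    have c2 := (hg 2 h0mem).continuousAt
    have c3 := (hg 3 h0mem).continuousAt
    rw [hL3def]
    exact ((c3.div c0 hne).sub ((continuousAt_const.mul (c2.mul c1)).div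
      (c0.pow 2) (pow_ne_zero 2 hne))).add
      (continuousAt_const.mul ((c1.div c0 hne).pow 3))
  have hM0 : M 0 = 1 := by
    rw [hM]; simp
  have hK0 : K 0 = 0 := by
    rw [hKdef]; simp only [hM0, Real.log_one]
  -- eventually filters
  have hevsmall : ∀ᶠ t in 𝓝[>] (0 : ℝ), |t| < ε / 2 := by
    refine Filter.Eventually.filter_mono nhdsWithin_le_nhds ?_
    have h := Metric.ball_mem_nhds (0 : ℝ) (half_pos hε)
    filter_upwards [h] with t ht
    exact hmem ht
  have hevpos : ∀ᶠ t in 𝓝[>] (0 : ℝ), 0 < t := eventually_mem_nhdsWithin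
  -- l'Hopital, step 1
  have hT2 : Tendsto (fun t => (L2 t - (κ2 + κ3 * t)) / (6 * t)) (𝓝[>] (0 : ℝ)) (𝓝 0) := by
    refine HasDerivAt.lhopital_zero_nhdsGT
      (f' := fun t => L3 t - κ3) (g' := fun _ => (6 : ℝ)) ?_ ?_ ?_ ?_ ?_ ?_
    · filter_upwards [hevsmall] with t ht
      have h := (hL2d ht).sub (((hasDerivAt_id t).const_mul κ3).const_add κ2)
      simp at h
      exact h
    · filter_upwards with t
      simpa using (hasDerivAt_id t).const_mul (6 : ℝ)
    · filter_upwards with t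
      norm_num
    · have c : ContinuousAt (fun t => L2 t - (κ2 + κ3 * t)) 0 :=
        (hL2d h0mem).continuousAt.sub (by fun_prop)
      have h := c.tendsto.mono_left (nhdsWithin_le_nhds (s := Set.Ioi (0:ℝ)))
      simpa [hκ2'] using h
    · have hc : Continuous fun t : ℝ => 6 * t := continuous_const.mul continuous_id
      have h := (hc.tendsto 0).mono_left (nhdsWithin_le_nhds (s := Set.Ioi (0:ℝ)))
      simpa using h
    · have c : ContinuousAt (fun t => (L3 t - κ3) / 6) 0 :=
        (hL3c.sub continuousAt_const).div_const 6
      have h := c.tendsto.mono_left (nhdsWithin_le_nhds (s := Set.Ioi (0:ℝ)))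
      simpa [hκ3'] using h
  -- l'Hopital, step 2
  have hT1 : Tendsto (fun t => (L1 t - (κ1 + κ2 * t + κ3 * t ^ 2 / 2)) / (3 * t ^ 2))
      (𝓝[>] (0 : ℝ)) (𝓝 0) := by
    refine HasDerivAt.lhopital_zero_nhdsGT
      (f' := fun t => L2 t - (κ2 + κ3 * t)) (g' := fun t => 6 * t) ?_ ?_ ?_ ?_ ?_ hT2
    · filter_upwards [hevsmall] with t ht
      have hp : HasDerivAt (fun t : ℝ => κ1 + κ2 * t + κ3 * t ^ 2 / 2) (κ2 + κ3 * t) t := by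
        have h1 := ((hasDerivAt_id t).const_mul κ2).const_add κ1
        have h2 := ((hasDerivAt_pow 2 t).const_mul κ3).div_const 2
        refine (h1.add h2).congr_deriv ?_
        push_cast
        ring
      exact (hL1d ht).sub hp
    · filter_upwards with t
      have h := (hasDerivAt_pow 2 t).const_mul (3 : ℝ)
      refine h.congr_deriv ?_
      push_cast
      ring
    · filter_upwards [hevpos] with t ht
      positivity
    · have c : ContinuousAt (fun t => L1 t - (κ1 + κ2 * t + κ3 * t ^ 2 / 2)) 0 :=
        (hL1d h0mem).continuousAt.sub (by fun_prop)
      have h := c.tendsto.mono_left (nhdsWithin_le_nhds (s := Set.Ioi (0:ℝ)))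
      simpa [hκ1'] using h
    · have hc : Continuous fun t : ℝ => 3 * t ^ 2 := continuous_const.mul (continuous_pow 2)
      have h := (hc.tendsto 0).mono_left (nhdsWithin_le_nhds (s := Set.Ioi (0:ℝ)))
      simpa using h
  -- l'Hopital, step 3
  have hT0 : Tendsto (fun t => (K t - (κ1 * t + κ2 * t ^ 2 / 2 + κ3 * t ^ 3 / 6)) / t ^ 3)
      (𝓝[>] (0 : ℝ)) (𝓝 0) := by
    refine HasDerivAt.lhopital_zero_nhdsGT
      (f' := fun t => L1 t - (κ1 + κ2 * t + κ3 * t ^ 2 / 2)) (g' := fun t => 3 * t ^ 2)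
      ?_ ?_ ?_ ?_ ?_ hT1
    · filter_upwards [hevsmall] with t ht
      have hp : HasDerivAt (fun t : ℝ => κ1 * t + κ2 * t ^ 2 / 2 + κ3 * t ^ 3 / 6)
          (κ1 + κ2 * t + κ3 * t ^ 2 / 2) t := by
        have h1 := (hasDerivAt_id t).const_mul κ1
        have h2 := ((hasDerivAt_pow 2 t).const_mul κ2).div_const 2
        have h3 := ((hasDerivAt_pow 3 t).const_mul κ3).div_const 6
        refine ((h1.add h2).add h3).congr_deriv ?_
        push_cast
        ring
      exact (hKd ht).sub hp
    · filter_upwards with t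
      have h := hasDerivAt_pow 3 t
      norm_num at h
      exact h
    · filter_upwards [hevpos] with t ht
      positivity
    · have c : ContinuousAt (fun t => K t - (κ1 * t + κ2 * t ^ 2 / 2 + κ3 * t ^ 3 / 6)) 0 :=
        (hKd h0mem).continuousAt.sub (by fun_prop)
      have h := c.tendsto.mono_left (nhdsWithin_le_nhds (s := Set.Ioi (0:ℝ)))
      simpa [hK0] using h
    · have hc : Continuous fun t : ℝ => t ^ 3 := continuous_pow 3
      have h := (hc.tendsto 0).mono_left (nhdsWithin_le_nhds (s := Set.Ioi (0:ℝ)))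
      simpa using h
  -- the sequence 1/n tends to 0 from the right
  have hseq : Tendsto (fun n : ℕ => ((n : ℝ))⁻¹) atTop (𝓝[>] (0 : ℝ)) := by
    refine tendsto_nhdsWithin_of_tendsto_nhds_of_eventually_within _
      tendsto_inv_atTop_nhds_zero_nat ?_
    filter_upwards [eventually_ge_atTop 1] with n hn
    have : (0:ℝ) < n := by exact_mod_cast Nat.lt_of_lt_of_le Nat.zero_lt_one hn
    exact Set.mem_Ioi.mpr (by positivity)
  -- eventual bounds on 1/n
  have hNe : ∀ᶠ n : ℕ in atTop, ((n : ℝ))⁻¹ ≤ ε ∧ 1 ≤ n := by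
    obtain ⟨N, hN⟩ := exists_nat_gt ε⁻¹
    filter_upwards [eventually_ge_atTop (max N 1)] with n hn
    have hn1 : 1 ≤ n := le_trans (le_max_right N 1) hn
    have hnN : (N : ℝ) ≤ n := by exact_mod_cast le_trans (le_max_left N 1) hn
    have hnpos : (0:ℝ) < n := by
      have : (0:ℕ) < n := lt_of_lt_of_le Nat.zero_lt_one hn1
      exact_mod_cast this
    refine ⟨?_, hn1⟩
    have h2 : ε⁻¹ < (n : ℝ) := lt_of_lt_of_le hN hnN
    have h3 : (1:ℝ) ≤ ε * n := by
      nlinarith [mul_inv_cancel₀ (ne_of_gt hε)]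
    rw [inv_eq_one_div, div_le_iff₀ hnpos]
    linarith
  -- change of variables for the mgf of the identically distributed variables
  have hcexp : ∀ t : ℝ, Continuous (fun x : ℝ => Real.exp (t * x)) :=
    fun t => Real.continuous_exp.comp (continuous_const.mul continuous_id)
  have hmgfZ : ∀ (k : ℕ) (t : ℝ), mgf (Z k) ℙ t = M t := by
    intro k t
    rw [hM]
    calc mgf (Z k) ℙ t = ∫ x, Real.exp (t * x) ∂(Measure.map (Z k) ℙ) :=
          (integral_map (hmeas k).aemeasurable
            ((hcexp t).aestronglyMeasurable)).symm
      _ = ∫ x, Real.exp (t * x) ∂(Measure.map (Z 0) ℙ) := by rw [hident k]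
      _ = ∫ ω, Real.exp (t * Z 0 ω) ∂ℙ :=
          integral_map (hmeas 0).aemeasurable ((hcexp t).aestronglyMeasurable)
  -- Part 1
  have hpart1 : ∀ᶠ n : ℕ in atTop, (∫ ω, ρ n ω ∂ℙ) = M (1 / n) ^ n := by
    filter_upwards [hNe] with n hn
    have h1 : (∫ ω, ρ n ω ∂ℙ) = mgf (∑ k ∈ Finset.range n, Z k) ℙ ((n : ℝ))⁻¹ := by
      simp only [mgf]
      congr 1
      funext ω
      rw [hρ n ω]
      congr 1
      rw [Finset.sum_apply]
    rw [h1, hindep.mgf_sum hmeas]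
    have h2 : ∀ k ∈ Finset.range n, mgf (Z k) ℙ ((n : ℝ))⁻¹ = M (1 / n) := by
      intro k _
      rw [hmgfZ k, one_div]
    rw [Finset.prod_congr rfl h2, Finset.prod_const, Finset.card_range]
  refine ⟨hpart1, ?_⟩
  -- Part 2
  set u : ℕ → ℝ := fun n => (n : ℝ) * K ((n : ℝ))⁻¹ - κ1 with hu
  have hW := hT0.comp hseq
  have hP : Tendsto (fun n : ℕ => (n : ℝ) ^ 2 * (u n - κ2 / (2 * n))) atTop (𝓝 (κ3 / 6)) := by
    have h := hW.add_const (κ3 / 6)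
    rw [zero_add] at h
    refine Tendsto.congr' ?_ h
    filter_upwards [eventually_ge_atTop 1] with n hn
    have hn0 : ((n : ℝ)) ≠ 0 := Nat.cast_ne_zero.mpr (by omega)
    simp only [Function.comp, hu]
    field_simp
    ring
  have hQ : Tendsto (fun n : ℕ => (n : ℝ) * u n) atTop (𝓝 (κ2 / 2)) := by
    have h := (tendsto_inv_atTop_nhds_zero_nat.mul hP).add_const (κ2 / 2)
    rw [zero_mul, zero_add] at h
    refine Tendsto.congr' ?_ h
    filter_upwards [eventually_ge_atTop 1] with n hn
    have hn0 : ((n : ℝ)) ≠ 0 := Nat.cast_ne_zero.mpr (by omega)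
    field_simp
    ring
  have hu0 : Tendsto u atTop (𝓝 0) := by
    have h := tendsto_inv_atTop_nhds_zero_nat.mul hQ
    rw [zero_mul] at h
    refine Tendsto.congr' ?_ h
    filter_upwards [eventually_ge_atTop 1] with n hn
    have hn0 : ((n : ℝ)) ≠ 0 := Nat.cast_ne_zero.mpr (by omega)
    field_simp
  -- express the normalized integral using u
  have hExp : ∀ᶠ n : ℕ in atTop, (∫ ω, ρ n ω ∂ℙ) / ρlim = Real.exp (u n) := by
    filter_upwards [hpart1, hNe] with n hn hn2
    rw [hn, hρlim]
    have habs : |1 / (n : ℝ)| ≤ ε := by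
      rw [one_div, abs_of_nonneg (by positivity)]
      exact hn2.1
    have hpos := hMpos (1 / (n : ℝ)) habs
    rw [← Real.exp_log hpos, ← Real.exp_nat_mul, ← Real.exp_sub]
    congr 1
    simp only [hu, hKdef, one_div]
  -- the remainder term
  have hR : Tendsto (fun n : ℕ => (n : ℝ) ^ 2 *
      (Real.exp (u n) - 1 - u n - u n ^ 2 / 2)) atTop (𝓝 0) := by
    have hb : Tendsto (fun n : ℕ => |(n : ℝ) * u n| ^ 3 * (2 / 9) * ((n : ℝ))⁻¹)
        atTop (𝓝 0) := by
      have h := ((hQ.abs.pow 3).mul_const (2 / 9)).mul tendsto_inv_atTop_nhds_zero_nat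
      rw [mul_zero] at h
      exact h
    refine squeeze_zero_norm' ?_ hb
    have hsm : ∀ᶠ n : ℕ in atTop, |u n| ≤ 1 := by
      have h := hu0.eventually (eventually_abs_sub_lt 0 one_pos)
      filter_upwards [h] with n hn
      simpa using hn.le
    filter_upwards [hsm, eventually_ge_atTop 1] with n hn hn1
    have hn0 : (0:ℝ) < n := by
      have : (0:ℕ) < n := by omega
      exact_mod_cast this
    have hexp := Real.exp_bound hn (n := 3) (by norm_num)
    have hsum : ∑ m ∈ Finset.range 3, u n ^ m / (Nat.factorial m : ℝ)
        = 1 + u n + u n ^ 2 / 2 := by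
      simp [Finset.sum_range_succ, Nat.factorial]
      try ring
    rw [Real.norm_eq_abs, abs_mul, abs_pow, Nat.abs_cast]
    have h5 : |Real.exp (u n) - 1 - u n - u n ^ 2 / 2| ≤ |u n| ^ 3 * (2 / 9) := by
      have heq : Real.exp (u n) - 1 - u n - u n ^ 2 / 2
          = Real.exp (u n) - ∑ m ∈ Finset.range 3, u n ^ m / (Nat.factorial m : ℝ) := by
        rw [hsum]; ring
      rw [heq]
      exact le_trans hexp (le_of_eq (by norm_num [Nat.factorial]))
    calc (n:ℝ) ^ 2 * |Real.exp (u n) - 1 - u n - u n ^ 2 / 2|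
        ≤ (n:ℝ) ^ 2 * (|u n| ^ 3 * (2 / 9)) := by gcongr
      _ = |(n : ℝ) * u n| ^ 3 * (2 / 9) * ((n : ℝ))⁻¹ := by
          rw [abs_mul, abs_of_pos hn0]
          field_simp
  -- final assembly
  have hfinal := (hR.add hP).add ((hQ.pow 2).div_const 2)
  have hval : ((0 : ℝ) + κ3 / 6) + (κ2 / 2) ^ 2 / 2 = κ3 / 6 + κ2 ^ 2 / 8 := by ring
  rw [hval] at hfinal
  refine Tendsto.congr' ?_ hfinal
  filter_upwards [hExp] with n hn
  rw [← hn]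
  ring
end

section
/- (Edgeworth expansion of the variance.) Let (Z_k)_{k≥1} be i.i.d. real random variables whose moment generating function M(t) := E[e^{t Z_1}] is finite on a neighborhood of 0, with cumulants κ_1, κ_2, κ_3 (the first three derivatives at 0 of K := log M). Define ρ_n := exp( (1/n) Σ_{k=1}^n Z_k ) and ρ_∞ := e^{κ_1}. Then Var(ρ_n) = M(2/n)^n − M(1/n)^{2n} for all n large enough, and n ( n · Var(ρ_n)/ρ_∞² − κ_2 ) → (2κ_3 + 3κ_2²)/2 as n → ∞; equivalently, n · Var(ρ_n) = ρ_∞² ( κ_2 + (2κ_3 + 3κ_2²)/(2n) + o(n^{-1}) ). -/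
open MeasureTheory ProbabilityTheory Filter

section EdgeworthAux
open Set Real Topology

lemma slope_limit {h : ℝ → ℝ} {c : ℝ} (hc : HasDerivAt h c 0) (h0 : h 0 = 0) :
    Tendsto (fun x => h x / x) (𝓝[>] (0:ℝ)) (𝓝 c) := by
  have h1 := hasDerivAt_iff_tendsto_slope.mp hc
  have h2 : Tendsto (slope h 0) (𝓝[>] (0:ℝ)) (𝓝 c) :=
    h1.mono_left (nhdsWithin_mono _ (fun x hx => ne_of_gt hx))
  refine h2.congr (fun x => ?_)
  simp [slope, h0, div_eq_inv_mul]

lemma mem_Ioo_ev {δ : ℝ} (hδ : 0 < δ) :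
    ∀ᶠ x in 𝓝[>] (0:ℝ), x ∈ Set.Ioo (0:ℝ) δ :=
  Ioo_mem_nhdsGT hδ

lemma L2 {h h' : ℝ → ℝ} {c δ : ℝ} (hδ : 0 < δ)
    (hd1 : ∀ x ∈ Set.Ioo (-δ) δ, HasDerivAt h (h' x) x)
    (hd2 : HasDerivAt h' c 0)
    (h0 : h 0 = 0) (h0' : h' 0 = 0) :
    Tendsto (fun x => h x / x ^ 2) (𝓝[>] (0:ℝ)) (𝓝 (c / 2)) := by
  have hmem : ∀ᶠ x in 𝓝[>] (0:ℝ), x ∈ Set.Ioo (-δ) δ := by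
    filter_upwards [mem_Ioo_ev hδ] with x hx
    exact ⟨lt_trans (neg_neg_of_pos hδ) hx.1, hx.2⟩
  have h0mem : (0:ℝ) ∈ Set.Ioo (-δ) δ := ⟨neg_neg_of_pos hδ, hδ⟩
  apply HasDerivAt.lhopital_zero_nhdsGT (f' := h') (g' := fun x => 2*x)
  · filter_upwards [hmem] with x hx using hd1 x hx
  · filter_upwards with x
    simpa using (hasDerivAt_pow 2 x)
  · filter_upwards [self_mem_nhdsWithin] with x hx
    have : (0:ℝ) < x := hx
    positivity
  · have := ((hd1 0 h0mem).continuousAt).continuousWithinAt (s := Set.Ioi (0:ℝ))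
    simpa [h0] using this.tendsto
  · have : Tendsto (fun x : ℝ => x ^ 2) (𝓝[>] (0:ℝ)) (𝓝 ((0:ℝ)^2)) :=
      ((continuous_pow 2).continuousAt).continuousWithinAt.tendsto
    simpa using this
  · have hs := slope_limit hd2 h0'
    have : Tendsto (fun x => h' x / x / 2) (𝓝[>] (0:ℝ)) (𝓝 (c / 2)) := hs.div_const 2
    refine this.congr (fun x => ?_)
    rw [div_div, mul_comm]

lemma L3 {h h' h'' : ℝ → ℝ} {c δ : ℝ} (hδ : 0 < δ)
    (hd1 : ∀ x ∈ Set.Ioo (-δ) δ, HasDerivAt h (h' x) x)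
    (hd2 : ∀ x ∈ Set.Ioo (-δ) δ, HasDerivAt h' (h'' x) x)
    (hd3 : HasDerivAt h'' c 0)
    (h0 : h 0 = 0) (h0' : h' 0 = 0) (h0'' : h'' 0 = 0) :
    Tendsto (fun x => h x / x ^ 3) (𝓝[>] (0:ℝ)) (𝓝 (c / 6)) := by
  have hmem : ∀ᶠ x in 𝓝[>] (0:ℝ), x ∈ Set.Ioo (-δ) δ := by
    filter_upwards [mem_Ioo_ev hδ] with x hx
    exact ⟨lt_trans (neg_neg_of_pos hδ) hx.1, hx.2⟩
  have h0mem : (0:ℝ) ∈ Set.Ioo (-δ) δ := ⟨neg_neg_of_pos hδ, hδ⟩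
  have inner : Tendsto (fun x => h' x / x ^ 2) (𝓝[>] (0:ℝ)) (𝓝 (c / 2)) :=
    L2 hδ hd2 hd3 h0' h0''
  apply HasDerivAt.lhopital_zero_nhdsGT (f' := h') (g' := fun x => 3*x^2)
  · filter_upwards [hmem] with x hx using hd1 x hx
  · filter_upwards with x
    simpa using (hasDerivAt_pow 3 x)
  · filter_upwards [self_mem_nhdsWithin] with x hx
    have : (0:ℝ) < x := hx
    positivity
  · have := ((hd1 0 h0mem).continuousAt).continuousWithinAt (s := Set.Ioi (0:ℝ))
    simpa [h0] using this.tendsto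
  · have : Tendsto (fun x : ℝ => x ^ 3) (𝓝[>] (0:ℝ)) (𝓝 ((0:ℝ)^3)) :=
      ((continuous_pow 3).continuousAt).continuousWithinAt.tendsto
    simpa using this
  · have : Tendsto (fun x => h' x / x ^ 2 / 3) (𝓝[>] (0:ℝ)) (𝓝 (c / 2 / 3)) := inner.div_const 3
    have he : c / 2 / 3 = c / 6 := by ring
    rw [he] at this
    refine this.congr (fun x => ?_)
    rw [div_div, mul_comm]


lemma analytic_main {K : ℝ → ℝ} {δ κ1 κ2 κ3 : ℝ} (hδ : 0 < δ)
    (hK : ContDiffOn ℝ 3 K (Set.Ioo (-δ) δ))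
    (hK0 : K 0 = 0)
    (h1 : κ1 = iteratedDeriv 1 K 0) (h2 : κ2 = iteratedDeriv 2 K 0)
    (h3 : κ3 = iteratedDeriv 3 K 0) :
    Tendsto (fun x => (Real.exp ((K (2*x) - 2*κ1*x)/x) - Real.exp ((2*K x - 2*κ1*x)/x)
        - κ2*x)/x^2)
      (𝓝[>] (0:ℝ)) (𝓝 ((2*κ3 + 3*κ2^2)/2)) := by
  have hs : IsOpen (Set.Ioo (-δ) δ) := isOpen_Ioo
  have h0mem : (0:ℝ) ∈ Set.Ioo (-δ) δ := ⟨neg_neg_of_pos hδ, hδ⟩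
  set K1 := deriv K with hK1def
  set K2 := deriv K1 with hK2def
  set K3 := deriv K2 with hK3def
  have hcd1 : ContDiffOn ℝ 2 K1 (Set.Ioo (-δ) δ) := hK.deriv_of_isOpen hs (by norm_num)
  have hcd2 : ContDiffOn ℝ 1 K2 (Set.Ioo (-δ) δ) := hcd1.deriv_of_isOpen hs (by norm_num)
  have hd1 : ∀ x ∈ Set.Ioo (-δ) δ, HasDerivAt K (K1 x) x := fun x hx =>
    ((hK.differentiableOn (by norm_num)).differentiableAt (hs.mem_nhds hx)).hasDerivAt
  have hd2 : ∀ x ∈ Set.Ioo (-δ) δ, HasDerivAt K1 (K2 x) x := fun x hx =>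
    ((hcd1.differentiableOn (by norm_num)).differentiableAt (hs.mem_nhds hx)).hasDerivAt
  have hd3 : ∀ x ∈ Set.Ioo (-δ) δ, HasDerivAt K2 (K3 x) x := fun x hx =>
    ((hcd2.differentiableOn (by norm_num)).differentiableAt (hs.mem_nhds hx)).hasDerivAt
  have hk1 : κ1 = K1 0 := by rw [h1, iteratedDeriv_one]
  have hk2 : κ2 = K2 0 := by rw [h2, iteratedDeriv_succ, iteratedDeriv_one]
  have hk3 : κ3 = K3 0 := by rw [h3, iteratedDeriv_succ, iteratedDeriv_succ, iteratedDeriv_one]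
  have hδ2 : 0 < δ/2 := by positivity
  have hmem2 : ∀ x : ℝ, x ∈ Set.Ioo (-(δ/2)) (δ/2) → (2*x) ∈ Set.Ioo (-δ) δ := by
    intro x hx
    constructor <;> [nlinarith [hx.1]; nlinarith [hx.2]]
  have hmem2' : ∀ x : ℝ, x ∈ Set.Ioo (-(δ/2)) (δ/2) → x ∈ Set.Ioo (-δ) δ := by
    intro x hx
    constructor <;> [nlinarith [hx.1]; nlinarith [hx.2]]
  have h20 : (2:ℝ)*0 ∈ Set.Ioo (-δ) δ := by simpa using h0mem
  set A : ℝ → ℝ := fun x => K (2*x) - 2*κ1*x with hA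
  set B : ℝ → ℝ := fun x => 2*K x - 2*κ1*x with hB
  set C : ℝ → ℝ := fun x => K (2*x) - 2*K x - κ2*x^2 with hC
  have hdK2x : ∀ x : ℝ, (2*x) ∈ Set.Ioo (-δ) δ →
      HasDerivAt (fun x => K (2*x)) (2 * K1 (2*x)) x := by
    intro x hx
    have hm : HasDerivAt (fun y : ℝ => 2*y) 2 x := by simpa using (hasDerivAt_id x).const_mul 2
    have h := HasDerivAt.comp x (hd1 (2*x) hx) hm
    rw [show (2 * K1 (2*x)) = K1 (2*x) * 2 by ring]
    exact h
  have hdK12x : ∀ x : ℝ, (2*x) ∈ Set.Ioo (-δ) δ →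
      HasDerivAt (fun x => K1 (2*x)) (2 * K2 (2*x)) x := by
    intro x hx
    have hm : HasDerivAt (fun y : ℝ => 2*y) 2 x := by simpa using (hasDerivAt_id x).const_mul 2
    have h := HasDerivAt.comp x (hd2 (2*x) hx) hm
    rw [show (2 * K2 (2*x)) = K2 (2*x) * 2 by ring]
    exact h
  have hdK22x : ∀ x : ℝ, (2*x) ∈ Set.Ioo (-δ) δ →
      HasDerivAt (fun x => K2 (2*x)) (2 * K3 (2*x)) x := by
    intro x hx
    have hm : HasDerivAt (fun y : ℝ => 2*y) 2 x := by simpa using (hasDerivAt_id x).const_mul 2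
    have h := HasDerivAt.comp x (hd3 (2*x) hx) hm
    rw [show (2 * K3 (2*x)) = K3 (2*x) * 2 by ring]
    exact h
  -- Taylor-type limits
  have tA : Tendsto (fun x => A x / x ^ 2) (𝓝[>] (0:ℝ)) (𝓝 ((4*κ2) / 2)) := by
    apply L2 (h' := fun x => 2 * K1 (2*x) - 2*κ1) hδ2
    · intro x hx
      have h := (hdK2x x (hmem2 x hx)).sub ((hasDerivAt_id x).const_mul (2*κ1))
      simpa [hA, Pi.sub_def] using h
    · have h := ((hdK12x 0 h20).const_mul 2).sub_const (2*κ1)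
      have he : (4:ℝ)*κ2 = 2*(2*K2 (2*0)) := by rw [hk2]; norm_num; ring
      rw [he]
      exact h
    · simp [hA, hK0]
    · rw [hk1]; norm_num
  have tB : Tendsto (fun x => B x / x ^ 2) (𝓝[>] (0:ℝ)) (𝓝 ((2*κ2) / 2)) := by
    apply L2 (h' := fun x => 2 * K1 x - 2*κ1) hδ2
    · intro x hx
      have h := ((hd1 x (hmem2' x hx)).const_mul 2).sub ((hasDerivAt_id x).const_mul (2*κ1))
      simpa [hB, Pi.sub_def] using h
    · have h := ((hd2 0 h0mem).const_mul 2).sub_const (2*κ1)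
      have he : (2:ℝ)*κ2 = 2*(K2 0) := by rw [hk2]
      rw [he]
      exact h
    · simp [hB, hK0]
    · rw [hk1]; norm_num
  have tC : Tendsto (fun x => C x / x ^ 3) (𝓝[>] (0:ℝ)) (𝓝 ((6*κ3) / 6)) := by
    apply L3 (h' := fun x => 2 * K1 (2*x) - 2 * K1 x - 2*κ2*x)
      (h'' := fun x => 4 * K2 (2*x) - 2 * K2 x - 2*κ2) hδ2
    · intro x hx
      have h := ((hdK2x x (hmem2 x hx)).sub ((hd1 x (hmem2' x hx)).const_mul 2)).sub
        (((hasDerivAt_pow 2 x)).const_mul κ2)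
      have he : 2 * K1 (2*x) - 2 * K1 x - 2*κ2*x
          = 2 * K1 (2*x) - 2 * K1 x - κ2 * (↑2 * x ^ (2-1)) := by
        push_cast; ring
      rw [hC, he]
      exact h
    · intro x hx
      have h := (((hdK12x x (hmem2 x hx)).const_mul 2).sub
        ((hd2 x (hmem2' x hx)).const_mul 2)).sub ((hasDerivAt_id x).const_mul (2*κ2))
      have he : (4:ℝ) * K2 (2*x) - 2 * K2 x - 2*κ2 = 2 * (2 * K2 (2*x)) - 2 * K2 x - 2*κ2*1 := by
        ring
      rw [he]
      exact h
    · have h := (((hdK22x 0 h20).const_mul 4).sub ((hd3 0 h0mem).const_mul 2)).sub_const (2*κ2)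
      have he : (6:ℝ)*κ3 = 4*(2*K3 (2*0)) - 2*K3 0 := by rw [hk3]; norm_num; ring
      rw [he]
      exact h
    · simp [hC, hK0]
    · norm_num
    · rw [hk2]; ring
  have tendsto_x : Tendsto (fun x : ℝ => x) (𝓝[>] (0:ℝ)) (𝓝 0) :=
    tendsto_id.mono_left nhdsWithin_le_nhds
  have hxpos : ∀ᶠ x : ℝ in 𝓝[>] (0:ℝ), 0 < x := self_mem_nhdsWithin
  -- g x = A x / x → 0 and similarly for B
  have tg : Tendsto (fun x => A x / x) (𝓝[>] (0:ℝ)) (𝓝 0) := by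
    have h := tA.mul tendsto_x
    rw [mul_zero] at h
    refine h.congr' ?_
    filter_upwards [hxpos] with x hx
    field_simp
  have th : Tendsto (fun x => B x / x) (𝓝[>] (0:ℝ)) (𝓝 0) := by
    have h := tB.mul tendsto_x
    rw [mul_zero] at h
    refine h.congr' ?_
    filter_upwards [hxpos] with x hx
    field_simp
  -- remainder terms
  have habs1 : ∀ᶠ y in 𝓝 (0:ℝ), |y| ≤ 1 := by
    filter_upwards [Metric.closedBall_mem_nhds (0:ℝ) one_pos] with y hy
    simpa [Real.dist_eq] using hy
  have key_exp : ∀ y : ℝ, |y| ≤ 1 → |Real.exp y - (1 + y + y^2/2)| ≤ |y|^3 := by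
    intro y hy
    have hb := Real.exp_bound hy (by norm_num : 0 < 3)
    have h3 : ∑ m ∈ Finset.range 3, y ^ m / (Nat.factorial m) = 1 + y + y^2/2 := by
      simp [Finset.sum_range_succ, Nat.factorial]
    rw [h3] at hb
    have : |y|^3 * ((3:ℕ).succ / ((Nat.factorial 3) * 3)) ≤ |y|^3 := by
      have h0 : (0:ℝ) ≤ |y|^3 := by positivity
      have : ((3:ℕ).succ / ((Nat.factorial 3 : ℝ) * 3)) ≤ 1 := by
        norm_num [Nat.factorial]
      nlinarith
    linarith
  have remainder : ∀ (G : ℝ → ℝ) (L : ℝ),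
      Tendsto (fun x => G x / x ^ 2) (𝓝[>] (0:ℝ)) (𝓝 L) →
      Tendsto (fun x => G x / x) (𝓝[>] (0:ℝ)) (𝓝 0) →
      Tendsto (fun x => (Real.exp (G x / x) - (1 + G x / x + (G x / x)^2/2)) / x^2)
        (𝓝[>] (0:ℝ)) (𝓝 0) := by
    intro G L hG2 hG1
    have hev : ∀ᶠ x in 𝓝[>] (0:ℝ), |G x / x| ≤ 1 := hG1.eventually habs1
    have hbnd : Tendsto (fun x => |G x / x^2|^3 * x) (𝓝[>] (0:ℝ)) (𝓝 (|L|^3 * 0)) :=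
      ((hG2.abs).pow 3).mul tendsto_x
    rw [mul_zero] at hbnd
    apply squeeze_zero_norm' _ hbnd
    filter_upwards [hxpos, hev] with x hx hgx
    have hx' : x ≠ 0 := ne_of_gt hx
    have h1 := key_exp _ hgx
    have heq : |G x / x|^3 / x^2 = |G x / x^2|^3 * x := by
      rw [abs_div, abs_div, abs_of_pos hx, abs_of_pos (pow_pos hx 2)]
      field_simp
    calc ‖(Real.exp (G x / x) - (1 + G x / x + (G x / x)^2/2)) / x^2‖
        = |Real.exp (G x / x) - (1 + G x / x + (G x / x)^2/2)| / x^2 := by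
          rw [Real.norm_eq_abs, abs_div, abs_of_pos (pow_pos hx 2)]
      _ ≤ |G x / x|^3 / x^2 := by
          gcongr
      _ = |G x / x^2|^3 * x := heq
  have P1 := remainder A (4*κ2/2) tA tg
  have P2 := remainder B (2*κ2/2) tB th
  have S : Tendsto (fun x => ((A x/x^2)^2 - (B x/x^2)^2)/2) (𝓝[>] (0:ℝ))
      (𝓝 (((4*κ2/2)^2 - (2*κ2/2)^2)/2)) :=
    ((tA.pow 2).sub (tB.pow 2)).div_const 2
  have total := ((P1.sub P2).add tC).add S
  have hconst : ((0:ℝ) - 0 + 6*κ3/6) + ((4*κ2/2)^2 - (2*κ2/2)^2)/2 = (2*κ3 + 3*κ2^2)/2 := by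
    ring
  rw [hconst] at total
  refine total.congr' ?_
  filter_upwards [hxpos] with x hx
  have hx' : x ≠ 0 := ne_of_gt hx
  simp only [hA, hB, hC]
  field_simp
  ring

lemma exp_mul_le' {t c y : ℝ} (h : |t| ≤ c) :
    Real.exp (t * y) ≤ Real.exp (c * y) + Real.exp (-c * y) := by
  have hc : 0 ≤ c := le_trans (abs_nonneg t) h
  have key : t * y ≤ |c * y| := by
    calc t * y ≤ |t * y| := le_abs_self _
    _ = |t| * |y| := abs_mul _ _
    _ ≤ c * |y| := mul_le_mul_of_nonneg_right h (abs_nonneg y)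
    _ = |c * y| := by rw [abs_mul, abs_of_nonneg hc]
  rcases abs_cases (c * y) with ⟨he, _⟩ | ⟨he, _⟩
  · have h1 : Real.exp (t * y) ≤ Real.exp (c * y) :=
      Real.exp_le_exp.2 (by rw [← he]; exact key)
    linarith [Real.exp_pos (-c * y)]
  · have h1 : Real.exp (t * y) ≤ Real.exp (-c * y) := by
      rw [neg_mul]; exact Real.exp_le_exp.2 (by rw [← he]; exact key)
    linarith [Real.exp_pos (c * y)]

lemma exp_abs_le' {b : ℝ} (y : ℝ) (hb : 0 ≤ b) :
    Real.exp (b * |y|) ≤ Real.exp (b * y) + Real.exp (-b * y) := by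
  rcases abs_cases y with ⟨he, _⟩ | ⟨he, _⟩
  · rw [he]; exact le_add_of_nonneg_right (Real.exp_pos _).le
  · rw [he, mul_neg, ← neg_mul]; exact le_add_of_nonneg_left (Real.exp_pos _).le

lemma int_aux {Ω : Type*} [MeasureSpace Ω] [IsProbabilityMeasure (ℙ : Measure Ω)]
    {X : Ω → ℝ} (hX : Measurable X) {ε : ℝ}
    (hfin : ∀ t : ℝ, |t| ≤ ε → Integrable (fun ω => Real.exp (t * X ω)) ℙ)
    (r : ℕ) {t : ℝ} (ht : |t| < ε) :
    Integrable (fun ω => |X ω| ^ r * Real.exp (t * X ω)) ℙ := by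
  set b := ε - |t| with hb
  have hbpos : 0 < b := sub_pos.2 ht
  have h1 : |t + b| ≤ ε := by
    rw [abs_le]; constructor <;> [skip; skip] <;>
      [linarith [neg_abs_le t]; linarith [le_abs_self t]]
  have h2 : |t - b| ≤ ε := by
    rw [abs_le]; constructor <;> [skip; skip] <;>
      [linarith [neg_abs_le t]; linarith [le_abs_self t]]
  have hint : Integrable (fun ω => (r.factorial : ℝ) / b ^ r *
      (Real.exp ((t + b) * X ω) + Real.exp ((t - b) * X ω))) ℙ :=
    ((hfin _ h1).add (hfin _ h2)).const_mul _
  refine hint.mono' ?_ (ae_of_all _ fun ω => ?_)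
  · exact ((hX.abs.pow_const r).mul ((hX.const_mul t).exp)).aestronglyMeasurable
  · have hfr : (0:ℝ) < (r.factorial : ℝ) := by exact_mod_cast r.factorial_pos
    have hpow : |X ω| ^ r ≤ (r.factorial : ℝ) / b ^ r * Real.exp (b * |X ω|) := by
      have hsum : (b * |X ω|) ^ r / (r.factorial : ℝ) ≤ Real.exp (b * |X ω|) := by
        refine le_trans ?_ (Real.sum_le_exp_of_nonneg (by positivity) (r + 1))
        exact Finset.single_le_sum (f := fun i => (b * |X ω|) ^ i / (i.factorial : ℝ))
          (fun i _ => by positivity) (Finset.self_mem_range_succ r)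
      rw [mul_pow, div_le_iff₀ hfr] at hsum
      have hbr : (0:ℝ) < b ^ r := pow_pos hbpos r
      calc |X ω| ^ r = (b ^ r * |X ω| ^ r) / b ^ r := by field_simp
      _ ≤ (Real.exp (b * |X ω|) * (r.factorial : ℝ)) / b ^ r := by gcongr
      _ = (r.factorial : ℝ) / b ^ r * Real.exp (b * |X ω|) := by ring
    have hpow2 : |X ω| ^ r ≤ (r.factorial : ℝ) / b ^ r *
        (Real.exp (b * X ω) + Real.exp (-b * X ω)) :=
      hpow.trans (mul_le_mul_of_nonneg_left (exp_abs_le' _ hbpos.le) (by positivity))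
    have e1 : Real.exp (b * X ω) * Real.exp (t * X ω) = Real.exp ((t + b) * X ω) := by
      rw [← Real.exp_add]; congr 1; ring
    have e2 : Real.exp (-b * X ω) * Real.exp (t * X ω) = Real.exp ((t - b) * X ω) := by
      rw [← Real.exp_add]; congr 1; ring
    rw [Real.norm_eq_abs, abs_mul, abs_pow, abs_abs, Real.abs_exp]
    calc |X ω| ^ r * Real.exp (t * X ω)
        ≤ ((r.factorial : ℝ) / b ^ r * (Real.exp (b * X ω) + Real.exp (-b * X ω)))
            * Real.exp (t * X ω) :=
          mul_le_mul_of_nonneg_right hpow2 (Real.exp_pos _).le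
      _ = (r.factorial : ℝ) / b ^ r *
            (Real.exp ((t + b) * X ω) + Real.exp ((t - b) * X ω)) := by
          rw [mul_assoc, add_mul, e1, e2]

lemma int_aux' {Ω : Type*} [MeasureSpace Ω] [IsProbabilityMeasure (ℙ : Measure Ω)]
    {X : Ω → ℝ} (hX : Measurable X) {ε : ℝ}
    (hfin : ∀ t : ℝ, |t| ≤ ε → Integrable (fun ω => Real.exp (t * X ω)) ℙ)
    (r : ℕ) {t : ℝ} (ht : |t| < ε) :
    Integrable (fun ω => X ω ^ r * Real.exp (t * X ω)) ℙ := by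
  refine (int_aux hX hfin r ht).mono' ?_ (ae_of_all _ fun ω => ?_)
  · exact ((hX.pow_const r).mul ((hX.const_mul t).exp)).aestronglyMeasurable
  · rw [Real.norm_eq_abs, abs_mul, abs_pow, Real.abs_exp]

lemma deriv_aux {Ω : Type*} [MeasureSpace Ω] [IsProbabilityMeasure (ℙ : Measure Ω)]
    {X : Ω → ℝ} (hX : Measurable X) {ε : ℝ}
    (hfin : ∀ t : ℝ, |t| ≤ ε → Integrable (fun ω => Real.exp (t * X ω)) ℙ)
    (r : ℕ) {t₀ : ℝ} (ht : t₀ ∈ Set.Ioo (-ε) ε) :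
    HasDerivAt (fun t => ∫ ω, X ω ^ r * Real.exp (t * X ω) ∂ℙ)
      (∫ ω, X ω ^ (r + 1) * Real.exp (t₀ * X ω) ∂ℙ) t₀ := by
  have ht' : |t₀| < ε := abs_lt.2 ⟨ht.1, ht.2⟩
  set η := (ε - |t₀|) / 2 with hη
  have hηpos : 0 < η := by rw [hη]; linarith
  set c := |t₀| + η with hc
  have hcε : c < ε := by rw [hc, hη]; linarith
  have hc0 : 0 ≤ c := by positivity
  refine (hasDerivAt_integral_of_dominated_loc_of_deriv_le (Metric.ball_mem_nhds t₀ hηpos)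
    (Eventually.of_forall fun t =>
      ((hX.pow_const r).mul ((hX.const_mul t).exp)).aestronglyMeasurable)
    (int_aux' hX hfin r ht')
    (F' := fun t ω => X ω ^ (r + 1) * Real.exp (t * X ω))
    (((hX.pow_const (r+1)).mul ((hX.const_mul t₀).exp)).aestronglyMeasurable)
    (bound := fun ω => |X ω| ^ (r+1) * (Real.exp (c * X ω) + Real.exp (-c * X ω)))
    (ae_of_all _ fun ω t htb => ?_) ?_ (ae_of_all _ fun ω t htb => ?_)).2
  · have htc : |t| ≤ c := by
      have := abs_sub_abs_le_abs_sub t t₀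
      have hd : |t - t₀| < η := by rwa [Metric.mem_ball, Real.dist_eq] at htb
      rw [hc]; linarith
    rw [Real.norm_eq_abs, abs_mul, abs_pow, Real.abs_exp]
    exact mul_le_mul_of_nonneg_left (exp_mul_le' htc) (by positivity)
  · have hi := (int_aux hX hfin (r+1) (t := c) (by rwa [abs_of_nonneg hc0])).add
      (int_aux hX hfin (r+1) (t := -c) (by rwa [abs_neg, abs_of_nonneg hc0]))
    simpa [mul_add, Pi.add_def] using hi
  · have h1 : HasDerivAt (fun t : ℝ => t * X ω) (X ω) t := hasDerivAt_mul_const (X ω)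
    have h2 := (h1.exp).const_mul (X ω ^ r)
    have he : X ω ^ (r+1) * Real.exp (t * X ω) = X ω ^ r * (Real.exp (t * X ω) * X ω) := by
      ring
    show HasDerivAt (fun x => X ω ^ r * Real.exp (x * X ω)) (X ω ^ (r+1) * Real.exp (t * X ω)) t
    rw [he]
    exact h2

lemma cd_aux {Ω : Type*} [MeasureSpace Ω] [IsProbabilityMeasure (ℙ : Measure Ω)]
    {X : Ω → ℝ} (hX : Measurable X) {ε : ℝ}
    (hfin : ∀ t : ℝ, |t| ≤ ε → Integrable (fun ω => Real.exp (t * X ω)) ℙ)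
    (n r : ℕ) :
    ContDiffOn ℝ n (fun t => ∫ ω, X ω ^ r * Real.exp (t * X ω) ∂ℙ) (Set.Ioo (-ε) ε) := by
  induction n generalizing r with
  | zero =>
    rw [Nat.cast_zero, contDiffOn_zero]
    exact fun x hx => ((deriv_aux hX hfin r hx).continuousAt).continuousWithinAt
  | succ n ih =>
    have hcast : ((n + 1 : ℕ) : WithTop ℕ∞) = (n : WithTop ℕ∞) + 1 := by push_cast; rfl
    rw [hcast, contDiffOn_succ_iff_deriv_of_isOpen isOpen_Ioo]
    refine ⟨fun x hx => (deriv_aux hX hfin r hx).differentiableAt.differentiableWithinAt,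
      ?_, ?_⟩
    · intro h; exact absurd h (by simp)
    · exact (ih (r + 1)).congr fun x hx => (deriv_aux hX hfin r hx).deriv


/-- **Edgeworth expansion of the variance.**
For i.i.d. real random variables `Z k` whose moment generating function
`M(t) = E[e^{tZ}]` is finite on a neighborhood of `0`, with cumulants
`κ_r = (log M)^{(r)}(0)`, the quantity `ρ_n = exp((1/n) Σ_{k<n} Z k)` satisfies
`Var(ρ_n) = M(2/n)^n − M(1/n)^{2n}` for all `n` large enough, and
`n(n·Var(ρ_n)/ρ∞² − κ₂) → (2κ₃ + 3κ₂²)/2`, where `ρ∞ = e^{κ₁}`;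
i.e. `n·Var(ρ_n) = ρ∞²(κ₂ + (2κ₃ + 3κ₂²)/(2n) + o(n⁻¹))`. -/
theorem edgeworth_variance_expansion {Ω : Type*} [MeasureSpace Ω]
    [IsProbabilityMeasure (ℙ : Measure Ω)]
    (Z : ℕ → Ω → ℝ) (hmeas : ∀ k, Measurable (Z k))
    (hindep : iIndepFun Z ℙ)
    (hident : ∀ k, Measure.map (Z k) ℙ = Measure.map (Z 0) ℙ)
    (M : ℝ → ℝ) (hM : ∀ t, M t = ∫ ω, Real.exp (t * Z 0 ω) ∂ℙ)
    (hfin : ∃ ε > (0 : ℝ), ∀ t : ℝ, |t| ≤ ε →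
      Integrable (fun ω => Real.exp (t * Z 0 ω)) ℙ)
    (κ1 κ2 κ3 : ℝ)
    (hκ1 : κ1 = iteratedDeriv 1 (fun t => Real.log (M t)) 0)
    (hκ2 : κ2 = iteratedDeriv 2 (fun t => Real.log (M t)) 0)
    (hκ3 : κ3 = iteratedDeriv 3 (fun t => Real.log (M t)) 0)
    (ρ : ℕ → Ω → ℝ)
    (hρ : ∀ n ω, ρ n ω = Real.exp ((n : ℝ)⁻¹ * ∑ k ∈ Finset.range n, Z k ω))
    (ρlim : ℝ) (hρlim : ρlim = Real.exp κ1) :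
    (∀ᶠ n : ℕ in atTop, variance (ρ n) ℙ = M (2 / n) ^ n - M (1 / n) ^ (2 * n)) ∧
    Tendsto
      (fun n : ℕ => (n : ℝ) * ((n : ℝ) * variance (ρ n) ℙ / ρlim ^ 2 - κ2))
      atTop (nhds ((2 * κ3 + 3 * κ2 ^ 2) / 2)) := by
  obtain ⟨ε, hε, hfin⟩ := hfin
  have hZ0 := hmeas 0
  have hMpos : ∀ t : ℝ, |t| ≤ ε → 0 < M t := fun t ht => by
    rw [hM]; exact integral_exp_pos (hfin t ht)
  have hM0 : M 0 = 1 := by rw [hM]; simp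
  -- transfer integrability and mgf to each Z k
  have hint_k : ∀ (t : ℝ), |t| ≤ ε → ∀ k, Integrable (fun ω => Real.exp (t * Z k ω)) ℙ := by
    intro t ht k
    have hg : Measurable (fun x : ℝ => Real.exp (t * x)) := (measurable_const_mul t).exp
    have h0 : Integrable (fun x : ℝ => Real.exp (t * x)) (Measure.map (Z 0) ℙ) :=
      (integrable_map_measure hg.aestronglyMeasurable (hmeas 0).aemeasurable).mpr (hfin t ht)
    rw [← hident k] at h0
    exact (integrable_map_measure hg.aestronglyMeasurable (hmeas k).aemeasurable).mp h0
  have hmgf_k : ∀ (t : ℝ) (k : ℕ), mgf (Z k) ℙ t = M t := by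
    intro t k
    have hg : Measurable (fun x : ℝ => Real.exp (t * x)) := (measurable_const_mul t).exp
    rw [hM]
    calc mgf (Z k) ℙ t = ∫ ω, Real.exp (t * Z k ω) ∂ℙ := rfl
    _ = ∫ x, Real.exp (t * x) ∂(Measure.map (Z k) ℙ) :=
        (integral_map (hmeas k).aemeasurable hg.aestronglyMeasurable).symm
    _ = ∫ x, Real.exp (t * x) ∂(Measure.map (Z 0) ℙ) := by rw [hident k]
    _ = ∫ ω, Real.exp (t * Z 0 ω) ∂ℙ :=
        integral_map (hmeas 0).aemeasurable hg.aestronglyMeasurable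
  -- the variance formula
  have hvar : ∀ n : ℕ, 0 < n → 2 / (n:ℝ) ≤ ε →
      variance (ρ n) ℙ = M (2/(n:ℝ)) ^ n - M (1/(n:ℝ)) ^ (2*n) := by
    intro n hn hne
    have hnR : (0:ℝ) < n := Nat.cast_pos.2 hn
    have ht2 : |2/(n:ℝ)| ≤ ε := by rw [abs_of_pos (by positivity)]; exact hne
    have ht1 : |1/(n:ℝ)| ≤ ε := by
      rw [abs_of_pos (by positivity)]
      calc 1/(n:ℝ) ≤ 2/(n:ℝ) := by gcongr; norm_num
      _ ≤ ε := hne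
    set S : Ω → ℝ := (∑ k ∈ Finset.range n, Z k) with hS
    have hSapp : ∀ ω, S ω = ∑ k ∈ Finset.range n, Z k ω := fun ω => by
      rw [hS, Finset.sum_apply]
    have hSmeas : Measurable S := by
      have h : S = fun ω => ∑ k ∈ Finset.range n, Z k ω := funext hSapp
      rw [h]; exact Finset.measurable_sum _ (fun i _ => hmeas i)
    have hint_S : ∀ t : ℝ, |t| ≤ ε → Integrable (fun ω => Real.exp (t * S ω)) ℙ := fun t ht =>
      hindep.integrable_exp_mul_sum hmeas (fun i _ => hint_k t ht i)
    have hmgf_S : ∀ t : ℝ, mgf S ℙ t = M t ^ n := by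
      intro t
      rw [hS, hindep.mgf_sum hmeas]
      simp [hmgf_k t]
    have hρ1 : ρ n = fun ω => Real.exp ((1/(n:ℝ)) * S ω) := by
      funext ω; rw [hρ n ω, hSapp, one_div]
    have hρ2 : (fun ω => (ρ n ω)^2) = fun ω => Real.exp ((2/(n:ℝ)) * S ω) := by
      funext ω
      rw [hρ1]
      simp only
      rw [sq, ← Real.exp_add]
      congr 1
      ring
    have hmes : AEStronglyMeasurable (ρ n) ℙ := by
      rw [hρ1]
      exact ((hSmeas.const_mul _).exp).aestronglyMeasurable
    have hmem : MemLp (ρ n) 2 ℙ := by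
      rw [memLp_two_iff_integrable_sq hmes]
      have : (fun x => ρ n x ^ 2) = fun ω => Real.exp ((2/(n:ℝ)) * S ω) := hρ2
      rw [this]
      exact hint_S _ ht2
    rw [variance_eq_sub hmem]
    have e2 : ℙ[(ρ n)^2] = M (2/(n:ℝ))^n := by
      have h1 : ℙ[(ρ n)^2] = ∫ ω, Real.exp ((2/(n:ℝ)) * S ω) ∂ℙ := by
        rw [← hρ2]; simp [Pi.pow_apply]
      rw [h1]
      exact hmgf_S (2/(n:ℝ))
    have e1 : ℙ[ρ n] = M (1/(n:ℝ))^n := by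
      have h1 : ℙ[ρ n] = ∫ ω, Real.exp ((1/(n:ℝ)) * S ω) ∂ℙ := by rw [hρ1]
      rw [h1]
      exact hmgf_S (1/(n:ℝ))
    rw [e1, e2, ← pow_mul, mul_comm n 2]
  -- eventual conditions
  have hev : ∀ᶠ n : ℕ in atTop, 0 < n ∧ 2/(n:ℝ) ≤ ε := by
    have h2 : ∀ᶠ n : ℕ in atTop, 2/(n:ℝ) ≤ ε :=
      (tendsto_const_div_atTop_nhds_zero_nat 2).eventually (eventually_le_nhds hε)
    filter_upwards [eventually_gt_atTop 0, h2] with n h1 h2 using ⟨h1, h2⟩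
  have part1 : ∀ᶠ n : ℕ in atTop,
      variance (ρ n) ℙ = M (2/(n:ℝ)) ^ n - M (1/(n:ℝ)) ^ (2*n) := by
    filter_upwards [hev] with n hn using hvar n hn.1 hn.2
  refine ⟨part1, ?_⟩
  -- smoothness of log M
  have hM3 : ContDiffOn ℝ 3 M (Set.Ioo (-ε) ε) := by
    have h := cd_aux hZ0 hfin 3 0
    have hc : ((3:ℕ) : WithTop ℕ∞) = 3 := by norm_cast
    rw [hc] at h
    exact h.congr (fun t ht => by rw [hM]; simp)
  have hKcd : ContDiffOn ℝ 3 (fun t => Real.log (M t)) (Set.Ioo (-ε) ε) :=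
    hM3.log (fun t ht => (hMpos t (le_of_lt (abs_lt.2 ⟨ht.1, ht.2⟩))).ne')
  have hK0 : Real.log (M 0) = 0 := by rw [hM0, Real.log_one]
  have hlim := analytic_main hε hKcd hK0 hκ1 hκ2 hκ3
  have hcomp : Tendsto (fun n : ℕ => ((n:ℝ))⁻¹) atTop (𝓝[>] (0:ℝ)) := by
    rw [tendsto_nhdsWithin_iff]
    refine ⟨tendsto_inv_atTop_nhds_zero_nat, ?_⟩
    filter_upwards [eventually_gt_atTop 0] with n hn
    exact inv_pos.mpr (show (0:ℝ) < (n:ℝ) from Nat.cast_pos.2 hn)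
  have hcmp := hlim.comp hcomp
  refine hcmp.congr' ?_
  filter_upwards [hev] with n hn
  obtain ⟨hn0, hne⟩ := hn
  have hnR : (0:ℝ) < n := Nat.cast_pos.2 hn0
  have hnn : (n:ℝ) ≠ 0 := hnR.ne'
  have ht2 : |2/(n:ℝ)| ≤ ε := by rw [abs_of_pos (by positivity)]; exact hne
  have ht1 : |1/(n:ℝ)| ≤ ε := by
    rw [abs_of_pos (by positivity)]
    calc 1/(n:ℝ) ≤ 2/(n:ℝ) := by gcongr; norm_num
    _ ≤ ε := hne
  simp only [Function.comp_apply]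
  rw [hvar n hn0 hne, hρlim]
  have h2n : (2:ℝ) * ((n:ℝ))⁻¹ = 2/(n:ℝ) := by rw [div_eq_mul_inv]
  rw [h2n]
  set a := Real.log (M (2/(n:ℝ))) with ha
  set b := Real.log (M ((n:ℝ)⁻¹)) with hb
  have hb' : Real.log (M (1/(n:ℝ))) = b := by rw [hb, one_div]
  have e1 : (a - 2*κ1*((n:ℝ))⁻¹)/((n:ℝ))⁻¹ = (n:ℝ)*a - 2*κ1 := by
    field_simp
  have e2 : (2*b - 2*κ1*((n:ℝ))⁻¹)/((n:ℝ))⁻¹ = 2*(n:ℝ)*b - 2*κ1 := by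
    field_simp
  rw [e1, e2, Real.exp_sub, Real.exp_sub]
  have p1 : M (2/(n:ℝ)) ^ n = Real.exp ((n:ℝ)*a) := by
    rw [ha, Real.exp_nat_mul, Real.exp_log (hMpos _ ht2)]
  have hM1pos : 0 < M (1/(n:ℝ)) := hMpos _ ht1
  have p2 : M (1/(n:ℝ)) ^ (2*n) = Real.exp (2*(n:ℝ)*b) := by
    have hM1 : M (1/(n:ℝ)) = Real.exp b := by
      rw [← hb', Real.exp_log hM1pos]
    rw [hM1, ← Real.exp_nat_mul]
    congr 1
    push_cast
    ring
  rw [p1, p2]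
  have p3 : Real.exp κ1 ^ 2 = Real.exp (2*κ1) := by
    rw [show (2:ℝ)*κ1 = ((2:ℕ):ℝ)*κ1 by norm_num, Real.exp_nat_mul]
  rw [p3]
  have hx : ((n:ℝ))⁻¹ ≠ 0 := inv_ne_zero hnn
  field_simp

end EdgeworthAux
end
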